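/- arXiv:1805.09211 — 8 statements merged into one kernel-verified Lean document; each statement's English description precedes it below -/
import Mathlib

section
/- Let d ≥ 1 be an integer, ω = exp(2πi/d), and let v = (v_0, …, v_{d−1}) ∈ ℂ^d have at most k nonzero coordinates, where 1 ≤ k ≤ d. If there exists an integer i₀ such that ∑_{j=0}^{d−1} v_j ω^{i·j} = 0 for every integer i with i₀ ≤ i ≤ i₀ + k − 1 (k consecutive vanishing Fourier coefficients), then v = 0. -/
open Complex

/-- `ω d = exp(2πi/d)`, the primitive `d`-th root of unity in `ℂ`. -/
noncomputable def ω (d : ℕ) : ℂ := Complex.exp (2 * Real.pi * Complex.I / d)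

/-- If `v ∈ ℂ^d` has at most `k` nonzero coordinates (`1 ≤ k ≤ d`) and `k`
consecutive Fourier coefficients `∑_j v_j ω^{ij}` (for `i₀ ≤ i ≤ i₀ + k - 1`)
vanish, then `v = 0`. -/
theorem stmt_2 (d : ℕ) (hd : 1 ≤ d) (k : ℕ) (hk1 : 1 ≤ k) (hkd : k ≤ d)
    (v : Fin d → ℂ) (hsupp : ({j | v j ≠ 0} : Set (Fin d)).ncard ≤ k)
    (i₀ : ℤ)
    (hfc : ∀ i : ℤ, i₀ ≤ i → i ≤ i₀ + k - 1 →
      ∑ jj : Fin d, v jj * ω d ^ (i * ((jj : ℕ) : ℤ)) = 0) :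
    v = 0 := by
  have hdne : (d : ℕ) ≠ 0 := by omega
  have hprim : IsPrimitiveRoot (ω d) d := Complex.isPrimitiveRoot_exp d hdne
  have hω0 : ω d ≠ 0 := hprim.ne_zero hdne
  -- support finset
  set S : Finset (Fin d) := Finset.univ.filter (fun j => v j ≠ 0) with hS
  have hsetS : ({j | v j ≠ 0} : Set (Fin d)) = ↑S := by
    ext j; simp [hS]
  have hcard : S.card ≤ k := by
    have := hsupp
    rw [hsetS, Set.ncard_coe_finset] at this
    exact this
  set m := S.card with hm
  set f : Fin m → Fin d := fun s => S.orderEmbOfFin rfl s with hf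
  have hfinj : Function.Injective f := (S.orderEmbOfFin rfl).injective
  have hfmem : ∀ s, f s ∈ S := fun s => S.orderEmbOfFin_mem rfl s
  -- nodes
  set x : Fin m → ℂ := fun s => ω d ^ ((f s : ℕ)) with hx
  have hxinj : Function.Injective x := by
    intro a b hab
    apply hfinj
    have := hprim.pow_inj (f a).isLt (f b).isLt hab
    exact Fin.ext this
  set w : Fin m → ℂ := fun s => v (f s) * ω d ^ (i₀ * ((f s : ℕ) : ℤ)) with hw
  have hweq : ∀ t : Fin m, ∑ s : Fin m, w s * x s ^ (t : ℕ) = 0 := by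
    intro t
    have ht1 : i₀ ≤ i₀ + (t : ℕ) := by omega
    have ht2 : i₀ + (t : ℕ) ≤ i₀ + k - 1 := by
      have : (t : ℕ) < m := t.isLt
      have : (t : ℕ) < k := by omega
      omega
    have h0 := hfc (i₀ + (t : ℕ)) ht1 ht2
    -- restrict sum to S
    have hres : ∑ jj ∈ S, v jj * ω d ^ ((i₀ + (t : ℕ)) * ((jj : ℕ) : ℤ)) = 0 := by
      rw [← h0]
      apply Finset.sum_subset (Finset.subset_univ S)
      intro j _ hj
      have : v j = 0 := by
        by_contra h
        exact hj (by simp [hS, h])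
      simp [this]
    -- reindex via f
    have himg : S = Finset.image f Finset.univ := by
      apply Finset.coe_injective
      rw [Finset.coe_image, Finset.coe_univ, Set.image_univ]
      exact (S.range_orderEmbOfFin rfl).symm
    rw [himg, Finset.sum_image (fun a _ b _ h => hfinj h)] at hres
    rw [← hres]
    apply Finset.sum_congr rfl
    intro s _
    simp only [hw, hx]
    rw [add_mul, zpow_add₀ hω0, mul_assoc]
    congr 1
    have h1 : ω d ^ (((t : ℕ) : ℤ) * (((f s : ℕ)) : ℤ))
        = ω d ^ ((t : ℕ) * (f s : ℕ)) := by
      rw [← Nat.cast_mul, zpow_natCast]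
    rw [h1, mul_comm (t : ℕ) (f s : ℕ), pow_mul]
  have hwzero : w = 0 :=
    Matrix.eq_zero_of_forall_pow_sum_mul_pow_eq_zero hxinj hweq
  funext j
  by_contra hj
  simp only [Pi.zero_apply] at hj
  have hjS : j ∈ S := by simp [hS, hj]
  obtain ⟨s, hs⟩ : ∃ s, f s = j := by
    have : j ∈ Set.range f := by
      rw [hf]
      have := S.range_orderEmbOfFin rfl
      rw [show (fun s => S.orderEmbOfFin rfl s) = ⇑(S.orderEmbOfFin rfl) from rfl, this]
      exact hjS
    exact this
  have : w s = 0 := by rw [hwzero]; rfl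
  rw [hw] at this
  simp only at this
  rcases mul_eq_zero.mp this with h | h
  · rw [hs] at h; exact hj h
  · exact (zpow_ne_zero _ hω0) h
end

section
/- Let d ≥ 2 and let α = (α_0,…,α_{d−1}) ∈ ℂ^d satisfy ⟨α, X Z^i α⟩ = 0 for every i = 0, 1, …, d−1. Then α_j · α_{j+1 mod d} = 0 for every j ∈ ℤ/dℤ, and consequently the number of nonzero coordinates of α is at most ⌊d/2⌋. -/
open Complex

/-- The generalized Pauli operator `U_{m,n} = X^m Z^n` acting on `ℂ^d`
(coordinates indexed by `ZMod d`), where `X e_j = e_{j+1}` and `Z e_j = ω^j e_j`: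
`(U_{m,n} α)_k = ω^{n (k-m)} α_{k-m}`. -/
noncomputable def pU (d : ℕ) [NeZero d] (m n : ZMod d) (α : ZMod d → ℂ) : ZMod d → ℂ :=
  fun k => ω d ^ (n.val * (k - m).val) * α (k - m)

/-- The standard Hermitian inner product on `ℂ^d`. -/
noncomputable def ip (d : ℕ) [NeZero d] (α β : ZMod d → ℂ) : ℂ :=
  ∑ j : ZMod d, (starRingEnd ℂ) (α j) * β j

lemma dft_key (d : ℕ) [NeZero d] (c : ZMod d → ℂ)
    (hc : ∀ i < d, ∑ k : ZMod d, c k * ω d ^ (i * k.val) = 0) (m : ZMod d) : c m = 0 := by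
  have hd0 : d ≠ 0 := NeZero.ne d
  have hprim : IsPrimitiveRoot (ω d) d := Complex.isPrimitiveRoot_exp d hd0
  have hmv : m.val < d := ZMod.val_lt m
  have hzero : ∑ i ∈ Finset.range d, (ω d ^ (d - m.val)) ^ i *
      (∑ k : ZMod d, c k * ω d ^ (i * k.val)) = 0 := by
    apply Finset.sum_eq_zero
    intro i hi
    rw [hc i (Finset.mem_range.mp hi), mul_zero]
  simp_rw [Finset.mul_sum] at hzero
  rw [Finset.sum_comm] at hzero
  have hinner : ∀ k : ZMod d,
      ∑ i ∈ Finset.range d, (ω d ^ (d - m.val)) ^ i * (c k * ω d ^ (i * k.val)) =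
      c k * (if k = m then (d : ℂ) else 0) := by
    intro k
    have : ∀ i : ℕ, (ω d ^ (d - m.val)) ^ i * (c k * ω d ^ (i * k.val)) =
        c k * (ω d ^ (d - m.val + k.val)) ^ i := by
      intro i
      rw [← pow_mul, ← pow_mul, mul_left_comm, ← pow_add,
        show (d - m.val) * i + i * k.val = (d - m.val + k.val) * i by ring]
    simp_rw [this, ← Finset.mul_sum]
    congr 1
    by_cases hk : k = m
    · subst hk
      have : d - k.val + k.val = d := Nat.sub_add_cancel hmv.le
      rw [this, hprim.pow_eq_one]
      simp
    · simp only [hk, if_false]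
      set x := ω d ^ (d - m.val + k.val) with hx
      have hx1 : x ≠ 1 := by
        intro hx1
        have hdvd : d ∣ d - m.val + k.val := (hprim.pow_eq_one_iff_dvd _).mp hx1
        have h1 : 0 < d - m.val + k.val := by omega
        have h2 : d - m.val + k.val < 2 * d := by
          have := ZMod.val_lt k; omega
        have : d - m.val + k.val = d := by
          rcases hdvd with ⟨c', hc'⟩
          have hlt : c' < 2 := by
            by_contra hge
            push_neg at hge
            have : d * 2 ≤ d * c' := Nat.mul_le_mul_left d hge
            omega
          interval_cases c' <;> omega
        have : k.val = m.val := by omega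
        exact hk (ZMod.val_injective d this)
      have hxd : x ^ d = 1 := by
        rw [hx, ← pow_mul, mul_comm, pow_mul, hprim.pow_eq_one, one_pow]
      rw [geom_sum_eq hx1, hxd, sub_self, zero_div]
  simp_rw [hinner] at hzero
  rw [Finset.sum_eq_single m] at hzero
  · simp only [if_pos rfl] at hzero
    have : (d : ℂ) ≠ 0 := Nat.cast_ne_zero.mpr hd0
    exact (mul_eq_zero.mp hzero).resolve_right this
  · intro b _ hb; simp [hb]
  · simp

/-- If `⟨α, X Z^i α⟩ = 0` for `i = 0, …, d-1`, then `α_j α_{j+1} = 0` for all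
`j ∈ ℤ/dℤ`, and hence `α` has at most `⌊d/2⌋` nonzero coordinates. -/
theorem stmt_3 (d : ℕ) [NeZero d] (hd : 2 ≤ d) (α : ZMod d → ℂ)
    (h : ∀ i : ℕ, i ≤ d - 1 → ip d α (pU d 1 (i : ZMod d) α) = 0) :
    (∀ j : ZMod d, α j * α (j + 1) = 0) ∧
      ({j | α j ≠ 0} : Set (ZMod d)).ncard ≤ d / 2 := by
  have hd0 : d ≠ 0 := NeZero.ne d
  have hc : ∀ i < d, ∑ k : ZMod d,
      ((starRingEnd ℂ) (α (k + 1)) * α k) * ω d ^ (i * k.val) = 0 := by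
    intro i hi
    have := h i (by omega)
    rw [ip] at this
    rw [← this]
    apply Fintype.sum_equiv (Equiv.addRight (1 : ZMod d))
    intro k
    simp only [Equiv.coe_addRight, pU, add_sub_cancel_right,
      ZMod.val_cast_of_lt hi]
    ring
  have hA : ∀ j : ZMod d, α j * α (j + 1) = 0 := by
    intro j
    have := dft_key d _ hc j
    rcases mul_eq_zero.mp this with h1 | h1
    · rw [map_eq_zero] at h1
      rw [h1, mul_zero]
    · rw [h1, zero_mul]
  refine ⟨hA, ?_⟩
  classical
  set S : Finset (ZMod d) := Finset.univ.filter (fun j => α j ≠ 0) with hS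
  have hset : ({j | α j ≠ 0} : Set (ZMod d)) = ↑S := by
    ext j; simp [hS]
  rw [hset, Set.ncard_coe_finset]
  have hdisj : Disjoint S (S.image (· + 1)) := by
    rw [Finset.disjoint_left]
    intro x hx hx2
    rcases Finset.mem_image.mp hx2 with ⟨y, hy, rfl⟩
    simp only [hS, Finset.mem_filter] at hx hy
    exact hx.2 ((mul_eq_zero.mp (hA y)).resolve_left hy.2)
  have hcard : (S.image (· + 1)).card = S.card :=
    Finset.card_image_of_injective _ (add_left_injective 1)
  have h2 : S.card + S.card ≤ d := by
    calc S.card + S.card = S.card + (S.image (· + 1)).card := by rw [hcard]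
    _ = (S ∪ S.image (· + 1)).card := (Finset.card_union_of_disjoint hdisj).symm
    _ ≤ Fintype.card (ZMod d) := Finset.card_le_univ _
    _ = d := ZMod.card d
  omega
end

section
/- Let d ≥ 5 be odd and let i₀ be an integer with 1 ≤ i₀ ≤ d−2. Then there is no unit vector α ∈ ℂ^d such that ⟨α, X Z^i α⟩ = 0 for all i = 0, 1, …, d−1 and ⟨α, Z^i α⟩ = 0 for all integers i with i₀ ≤ i ≤ i₀ + ⌊d/2⌋ − 1. (Equivalently: any set S of generalized Bell states whose pairwise difference set ΔU contains {(1,i)}_{i=0}^{d−1} ∪ {(0,i)}_{i=i₀}^{i₀+⌊d/2⌋−1} is 1-LOCC indistinguishable.) -/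
open Complex

lemma omega_prim (d : ℕ) [NeZero d] : IsPrimitiveRoot (ω d) d :=
  Complex.isPrimitiveRoot_exp d (NeZero.ne d)

lemma geom_sum_zeta (d : ℕ) [NeZero d] (a : ℕ) :
    ∑ i ∈ Finset.range d, ((ω d) ^ a) ^ i = if d ∣ a then (d : ℂ) else 0 := by
  have hζ := omega_prim d
  by_cases h : d ∣ a
  · rw [if_pos h]
    have h1 : (ω d) ^ a = 1 := (hζ.pow_eq_one_iff_dvd a).mpr h
    simp [h1]
  · rw [if_neg h]
    have h1 : (ω d) ^ a ≠ 1 := fun hc => h ((hζ.pow_eq_one_iff_dvd a).mp hc)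
    have h2 : ((ω d) ^ a) ^ d = 1 := by
      rw [← pow_mul, mul_comm, pow_mul, hζ.pow_eq_one, one_pow]
    rw [geom_sum_eq h1, h2, sub_self, zero_div]

lemma pow_eq_of_mod (d : ℕ) [NeZero d] {x : ℂ} (hx : x ^ d = 1) {a b : ℕ}
    (h : a % d = b % d) : x ^ a = x ^ b := by
  conv_lhs => rw [← Nat.div_add_mod a d]
  conv_rhs => rw [← Nat.div_add_mod b d]
  rw [pow_add, pow_add, pow_mul, pow_mul, hx, one_pow, one_pow, h]

lemma dvd_iff_eq (d : ℕ) [NeZero d] (j j₀ : ZMod d) :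
    (d ∣ j.val + (d - j₀.val)) ↔ j = j₀ := by
  have hcast : ((j.val + (d - j₀.val) : ℕ) : ZMod d) = j - j₀ := by
    push_cast [Nat.cast_sub (le_of_lt (ZMod.val_lt j₀))]
    simp [ZMod.natCast_val, ZMod.cast_id, ZMod.natCast_self]
    ring
  rw [← ZMod.natCast_eq_zero_iff, hcast, sub_eq_zero]

lemma dft_zero (d : ℕ) [NeZero d] (g : ZMod d → ℂ)
    (h : ∀ i : ℕ, i < d → ∑ j : ZMod d, g j * (ω d) ^ (i * (ZMod.val j)) = 0) :
    ∀ j, g j = 0 := by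
  intro j₀
  have hd0 : 0 < d := Nat.pos_of_ne_zero (NeZero.ne d)
  have key : ∑ i ∈ Finset.range d, (∑ j : ZMod d,
      g j * ((ω d) ^ (j.val + (d - j₀.val))) ^ i) = 0 := by
    apply Finset.sum_eq_zero
    intro i hi
    have := h i (Finset.mem_range.mp hi)
    calc ∑ j : ZMod d, g j * ((ω d) ^ (j.val + (d - j₀.val))) ^ i
        = ∑ j : ZMod d, (g j * (ω d) ^ (i * j.val)) * (ω d) ^ (i * (d - j₀.val)) := by
          apply Finset.sum_congr rfl
          intro j _
          rw [← pow_mul, mul_assoc, ← pow_add]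
          congr 1
          ring
      _ = (∑ j : ZMod d, g j * (ω d) ^ (i * j.val)) * (ω d) ^ (i * (d - j₀.val)) := by
          rw [← Finset.sum_mul]
      _ = 0 := by rw [this, zero_mul]
  rw [Finset.sum_comm] at key
  have key2 : ∑ j : ZMod d, g j * (if d ∣ j.val + (d - j₀.val) then (d : ℂ) else 0) = 0 := by
    have e : ∑ j : ZMod d, g j * (if d ∣ j.val + (d - j₀.val) then (d : ℂ) else 0)
        = ∑ j : ZMod d, ∑ x ∈ Finset.range d, g j * ((ω d) ^ (j.val + (d - j₀.val))) ^ x := by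
      apply Finset.sum_congr rfl
      intro j _
      rw [← Finset.mul_sum, geom_sum_zeta]
    rw [e]
    exact key
  have key3 : g j₀ * (d : ℂ) = 0 := by
    rw [← key2]
    rw [Finset.sum_eq_single j₀]
    · rw [if_pos ((dvd_iff_eq d j₀ j₀).mpr rfl)]
    · intro j _ hne
      rw [if_neg (fun hc => hne ((dvd_iff_eq d j j₀).mp hc)), mul_zero]
    · intro hc; exact absurd (Finset.mem_univ j₀) hc
  have hdne : (d : ℂ) ≠ 0 := Nat.cast_ne_zero.mpr (NeZero.ne d)
  exact (mul_eq_zero.mp key3).resolve_right hdne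

/-- (Lemma 1 of the paper, odd `d`, general window.) For odd `d ≥ 5` and an
integer `i₀` with `1 ≤ i₀ ≤ d-2`, there is no unit vector `α ∈ ℂ^d` with
`⟨α, X Z^i α⟩ = 0` for all `i = 0,…,d-1` and `⟨α, Z^i α⟩ = 0` for all
`i₀ ≤ i ≤ i₀ + ⌊d/2⌋ - 1`; i.e. any set of GBSs whose difference set contains
`{(1,i)}_{i=0}^{d-1} ∪ {(0,i)}_{i=i₀}^{i₀+⌊d/2⌋-1}` is 1-LOCC indistinguishable. -/
theorem stmt_4 (d : ℕ) [NeZero d] (hd : 5 ≤ d) (hodd : Odd d)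
    (i₀ : ℤ) (hi₀ : 1 ≤ i₀) (hi₀' : i₀ ≤ (d : ℤ) - 2) :
    ¬ ∃ α : ZMod d → ℂ, ip d α α = 1 ∧
      (∀ i : ℕ, i ≤ d - 1 → ip d α (pU d 1 (i : ZMod d) α) = 0) ∧
      (∀ i : ℤ, i₀ ≤ i → i ≤ i₀ + ((d / 2 : ℕ) : ℤ) - 1 →
        ip d α (pU d 0 (i : ZMod d) α) = 0) := by
  classical
  rintro ⟨α, h1, hA, hB⟩
  have hd0 : 0 < d := by omega
  have hζ := omega_prim d
  have hζne : ω d ≠ 0 := hζ.ne_zero (NeZero.ne d)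
  have hζd : (ω d) ^ d = 1 := hζ.pow_eq_one
  -- Step A : adjacent coordinates cannot both be nonzero
  have stepA : ∀ j : ZMod d, (starRingEnd ℂ) (α (j + 1)) * α j = 0 := by
    apply dft_zero
    intro i hi
    have h0 := hA i (by omega)
    simp only [ip, pU] at h0
    have hval : ((i : ZMod d)).val = i := ZMod.val_natCast_of_lt hi
    calc ∑ j : ZMod d, ((starRingEnd ℂ) (α (j + 1)) * α j) * (ω d) ^ (i * j.val)
        = ∑ k : ZMod d, (starRingEnd ℂ) (α k) *
            ((ω d) ^ (((i : ZMod d)).val * (k - 1).val) * α (k - 1)) := by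
          apply Fintype.sum_equiv (Equiv.addRight (1 : ZMod d))
          intro x
          simp only [Equiv.coe_addRight, add_sub_cancel_right, hval]
          ring
      _ = 0 := h0
  -- the support of α
  let S : Finset (ZMod d) := Finset.univ.filter (fun j => α j ≠ 0)
  have hmemS : ∀ j, j ∈ S ↔ α j ≠ 0 := by intro j; simp [S]
  have hSadj : ∀ j, j ∈ S → j + 1 ∉ S := by
    intro j hj hj1
    rcases mul_eq_zero.mp (stepA j) with h | h
    · exact ((hmemS _).mp hj1) (by simpa using h)
    · exact ((hmemS _).mp hj) h
  have hcardd : Fintype.card (ZMod d) = d := ZMod.card d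
  have hcard2 : 2 * S.card ≤ d := by
    have himg : S.image (· + 1) ⊆ Sᶜ := by
      intro k hk
      rcases Finset.mem_image.mp hk with ⟨j, hj, rfl⟩
      exact Finset.mem_compl.mpr (hSadj j hj)
    have hinj : (S.image (· + 1)).card = S.card :=
      Finset.card_image_of_injective _ (add_left_injective 1)
    have hle := Finset.card_le_card himg
    rw [hinj, Finset.card_compl, hcardd] at hle
    omega
  have hScard : S.card ≤ d / 2 := by omega
  have hSne : S.Nonempty := by
    rw [Finset.nonempty_iff_ne_empty]
    intro hc
    have hz : ∀ j : ZMod d, α j = 0 := by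
      intro j
      by_contra h
      have := (hmemS j).mpr h
      rw [hc] at this
      exact absurd this (Finset.notMem_empty j)
    simp only [ip, hz, mul_zero, Finset.sum_const_zero] at h1
    exact zero_ne_one h1
  -- Vandermonde step
  set s := S.card with hs
  have hs1 : 0 < s := Finset.card_pos.mpr hSne
  let e : Fin s ≃ S := (Fintype.equivFinOfCardEq (Fintype.card_coe S)).symm
  let v : Fin s → ℂ := fun t => (ω d) ^ ((e t : ZMod d).val)
  have hvinj : Function.Injective v := by
    intro a b hab
    have h2 := hζ.pow_inj (ZMod.val_lt _) (ZMod.val_lt _) hab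
    exact e.injective (Subtype.ext (ZMod.val_injective d h2))
  have hvne : ∀ t, v t ≠ 0 := fun t => pow_ne_zero _ hζne
  let M : Matrix (Fin s) (Fin s) ℂ := fun t j => v j ^ (t : ℕ)
  have hdet : M.det ≠ 0 := by
    have hM : M = (Matrix.vandermonde v).transpose := by
      ext t j
      rfl
    rw [hM, Matrix.det_transpose, Matrix.det_vandermonde]
    apply Finset.prod_ne_zero_iff.mpr
    intro i _
    apply Finset.prod_ne_zero_iff.mpr
    intro j hj
    have hij : i ≠ j := ne_of_lt (Finset.mem_Ioi.mp hj)
    exact sub_ne_zero.mpr (fun hc => hij (hvinj hc.symm))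
  set n₀ : ℕ := ((i₀ : ZMod d)).val with hn₀
  let b : Fin s → ℂ := fun j => v j ^ n₀ * ((starRingEnd ℂ) (α (e j)) * α (e j))
  have hmul : M.mulVec b = 0 := by
    funext t
    show ∑ j : Fin s, v j ^ (t : ℕ) * (v j ^ n₀ * ((starRingEnd ℂ) (α (e j)) * α (e j))) = 0
    set n : ZMod d := ((i₀ + (t : ℕ) : ℤ) : ZMod d) with hn
    have htlt : (t : ℕ) < d / 2 := lt_of_lt_of_le t.isLt hScard
    have hwin := hB (i₀ + (t : ℕ)) (by omega) (by omega)
    simp only [ip, pU, sub_zero] at hwin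
    have hmod : n.val % d = (n₀ + (t : ℕ)) % d := by
      have e1 : (n.val : ℤ) = (i₀ + (t : ℕ)) % d := ZMod.val_intCast _
      have e2 : (n₀ : ℤ) = i₀ % d := ZMod.val_intCast _
      have : ((n.val % d : ℕ) : ℤ) = (((n₀ + (t : ℕ)) % d : ℕ) : ℤ) := by
        push_cast
        rw [e1, e2, Int.emod_emod_of_dvd _ dvd_rfl, Int.emod_add_emod]
      exact_mod_cast this
    have hpow : ∀ k : ZMod d, ((ω d) ^ k.val) ^ n.val = ((ω d) ^ k.val) ^ (n₀ + (t : ℕ)) := by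
      intro k
      apply pow_eq_of_mod d _ hmod
      rw [← pow_mul, mul_comm, pow_mul, hζd, one_pow]
    calc ∑ j : Fin s, v j ^ (t : ℕ) * (v j ^ n₀ * ((starRingEnd ℂ) (α (e j)) * α (e j)))
        = ∑ j : Fin s, (starRingEnd ℂ) (α (e j)) *
            ((ω d) ^ (n.val * ((e j : ZMod d)).val) * α (e j)) := by
          apply Finset.sum_congr rfl
          intro j _
          rw [mul_comm n.val _, pow_mul, hpow, pow_add]
          simp only [v]
          ring
      _ = ∑ x : S, (starRingEnd ℂ) (α x) * ((ω d) ^ (n.val * ((x : ZMod d)).val) * α x) :=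
          Equiv.sum_comp e (fun x : S => (starRingEnd ℂ) (α x) * ((ω d) ^ (n.val * (x : ZMod d).val) * α x))
      _ = ∑ k ∈ S, (starRingEnd ℂ) (α k) * ((ω d) ^ (n.val * k.val) * α k) :=
          Finset.sum_coe_sort S (fun k => (starRingEnd ℂ) (α k) * ((ω d) ^ (n.val * k.val) * α k))
      _ = ∑ k : ZMod d, (starRingEnd ℂ) (α k) * ((ω d) ^ (n.val * k.val) * α k) := by
          apply Finset.sum_subset (Finset.subset_univ S)
          intro k _ hk
          have : α k = 0 := not_not.mp (fun h => hk ((hmemS k).mpr h))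
          rw [this, mul_zero, mul_zero]
      _ = 0 := hwin
  have hb0 : b = 0 := Matrix.eq_zero_of_mulVec_eq_zero hdet hmul
  -- contradiction
  let j : Fin s := ⟨0, hs1⟩
  have hbj : b j = 0 := congrFun hb0 j
  have hne : α (e j) ≠ 0 := (hmemS _).mp (e j).2
  have : v j ^ n₀ ≠ 0 := pow_ne_zero _ (hvne j)
  rcases mul_eq_zero.mp hbj with h | h
  · exact this h
  · rcases mul_eq_zero.mp h with h | h
    · exact hne (by simpa using h)
    · exact hne h
end

section
/- Let d ≥ 5 be odd. Then there is no unit vector α ∈ ℂ^d such that ⟨α, X Z^i α⟩ = 0 for all i = 0, 1, …, d−1 and ⟨α, Z^i α⟩ = 0 for all integers i with ⌊d/2⌋ − ⌈(d−1)/4⌉ + 1 ≤ i ≤ ⌊d/2⌋. (Equivalently: any set S of generalized Bell states whose pairwise difference set ΔU contains {(1,i)}_{i=0}^{d−1} ∪ {(0,i)}_{i=⌊d/2⌋−⌈(d−1)/4⌉+1}^{⌊d/2⌋} is 1-LOCC indistinguishable.) -/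
open Complex

lemma omega_ne_zero (d : ℕ) : ω d ≠ 0 := Complex.exp_ne_zero _

lemma conj_omega (d : ℕ) : (starRingEnd ℂ) (ω d) = (ω d)⁻¹ := by
  rw [ω, ← Complex.exp_conj, ← Complex.exp_neg]
  congr 1
  simp [map_div₀, map_ofNat, Complex.conj_I, Complex.conj_natCast, Complex.conj_ofReal]
  ring

lemma conj_omega_zpow (d : ℕ) (z : ℤ) :
    (starRingEnd ℂ) (ω d ^ z) = ω d ^ (-z) := by
  rw [map_zpow₀, conj_omega, inv_zpow, ← zpow_neg]

lemma sum_zpow_eq (d : ℕ) [NeZero d] (c : ℤ) :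
    ∑ i ∈ Finset.range d, (ω d) ^ ((i : ℤ) * c) = if (d : ℤ) ∣ c then (d : ℂ) else 0 := by
  have hp := omega_prim d
  have h0 := omega_ne_zero d
  have hrw : ∀ i ∈ Finset.range d, (ω d) ^ ((i : ℤ) * c) = ((ω d) ^ c) ^ i := by
    intro i _
    rw [← zpow_natCast ((ω d) ^ c) i, ← zpow_mul, mul_comm]
  rw [Finset.sum_congr rfl hrw]
  by_cases hdvd : (d : ℤ) ∣ c
  · have : (ω d) ^ c = 1 := (hp.zpow_eq_one_iff_dvd c).mpr hdvd
    simp [this, if_pos hdvd]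
  · have hne : (ω d) ^ c ≠ 1 := fun h => hdvd ((hp.zpow_eq_one_iff_dvd c).mp h)
    rw [if_neg hdvd, geom_sum_eq hne]
    have : ((ω d) ^ c) ^ d = 1 := by
      rw [← zpow_natCast ((ω d) ^ c) d, ← zpow_mul, mul_comm, zpow_mul,
        zpow_natCast, hp.pow_eq_one, one_zpow]
    rw [this, sub_self, zero_div]

lemma fourierZero (d : ℕ) [NeZero d] (g : ZMod d → ℂ)
    (h : ∀ i : ℕ, i < d → ∑ j : ZMod d, g j * (ω d) ^ ((i : ℤ) * (j.val : ℤ)) = 0) :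
    ∀ j, g j = 0 := by
  intro j₀
  have h0 := omega_ne_zero d
  have key : ∑ i ∈ Finset.range d, (ω d) ^ (-(i : ℤ) * (j₀.val : ℤ)) *
      (∑ j : ZMod d, g j * (ω d) ^ ((i : ℤ) * (j.val : ℤ))) = 0 := by
    apply Finset.sum_eq_zero
    intro i hi
    rw [h i (Finset.mem_range.mp hi), mul_zero]
  rw [Finset.sum_congr rfl (fun i _ => Finset.mul_sum _ _ _)] at key
  rw [Finset.sum_comm] at key
  have key2 : ∀ j : ZMod d, ∑ i ∈ Finset.range d,
      (ω d) ^ (-(i : ℤ) * (j₀.val : ℤ)) * (g j * (ω d) ^ ((i : ℤ) * (j.val : ℤ)))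
      = g j * (if (d : ℤ) ∣ ((j.val : ℤ) - (j₀.val : ℤ)) then (d : ℂ) else 0) := by
    intro j
    rw [← sum_zpow_eq d, Finset.mul_sum]
    apply Finset.sum_congr rfl
    intro i _
    rw [show (i:ℤ) * ((j.val:ℤ) - (j₀.val:ℤ)) = (-(i:ℤ) * (j₀.val:ℤ)) + (i:ℤ) * (j.val:ℤ) by ring,
      zpow_add₀ h0]
    ring
  rw [Finset.sum_congr rfl (fun j _ => key2 j)] at key
  have key3 : ∀ j : ZMod d, ((d : ℤ) ∣ ((j.val : ℤ) - (j₀.val : ℤ))) ↔ j = j₀ := by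
    intro j
    rw [← ZMod.intCast_zmod_eq_zero_iff_dvd]
    push_cast
    rw [ZMod.natCast_val, ZMod.natCast_val, ZMod.cast_id, ZMod.cast_id, sub_eq_zero]
  have heq : ∀ j : ZMod d, g j * (if (d : ℤ) ∣ ((j.val : ℤ) - (j₀.val : ℤ)) then (d : ℂ) else 0)
      = g j * (if j = j₀ then (d : ℂ) else 0) := by
    intro j
    rw [if_congr (key3 j) rfl rfl]
  rw [Finset.sum_congr rfl (fun j _ => heq j)] at key
  rw [Finset.sum_eq_single j₀ (fun j _ hj => by simp [hj]) (by simp)] at key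
  simp only [if_pos rfl] at key
  rcases mul_eq_zero.mp key with h | h
  · exact h
  · exact absurd h (Nat.cast_ne_zero.mpr (NeZero.ne d))

lemma card_bound (d : ℕ) [NeZero d] (S : Finset (ZMod d))
    (h : ∀ k ∈ S, k + 1 ∉ S) : 2 * S.card ≤ d := by
  have himg : S.image (· + 1) ⊆ Sᶜ := by
    intro x hx
    rw [Finset.mem_image] at hx
    obtain ⟨k, hk, rfl⟩ := hx
    rw [Finset.mem_compl]
    exact h k hk
  have h1 : (S.image (· + 1)).card = S.card :=
    Finset.card_image_of_injective _ (add_left_injective 1)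
  have h2 : (Sᶜ).card = Fintype.card (ZMod d) - S.card := Finset.card_compl S
  have h3 := Finset.card_le_card himg
  rw [h1, h2, ZMod.card] at h3
  omega

lemma vandermonde_zero {s : ℕ} (x : Fin s → ℂ) (hx : Function.Injective x)
    (v : Fin s → ℂ) (h : ∀ j : Fin s, ∑ k, v k * x k ^ (j : ℕ) = 0) : ∀ k, v k = 0 := by
  have hdet : (Matrix.vandermonde x).transpose.det ≠ 0 := by
    rw [Matrix.det_transpose, Matrix.det_vandermonde_ne_zero_iff]
    exact hx
  have hmul : (Matrix.vandermonde x).transpose.mulVec v = 0 := by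
    funext j
    rw [Matrix.mulVec]
    simp only [dotProduct, Matrix.transpose_apply, Matrix.vandermonde_apply]
    show ∑ k : Fin s, x k ^ (j : ℕ) * v k = 0
    rw [← h j]
    exact Finset.sum_congr rfl (fun k _ => mul_comm _ _)
  have := Matrix.eq_zero_of_mulVec_eq_zero hdet hmul
  intro k
  rw [this]
  rfl


/-- (Lemma 1 of the paper, odd `d`, symmetric window.) For odd `d ≥ 5`, there is
no unit vector `α ∈ ℂ^d` with `⟨α, X Z^i α⟩ = 0` for all `i = 0,…,d-1` and
`⟨α, Z^i α⟩ = 0` for all `⌊d/2⌋ - ⌈(d-1)/4⌉ + 1 ≤ i ≤ ⌊d/2⌋`; i.e. any set of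
GBSs whose difference set contains
`{(1,i)}_{i=0}^{d-1} ∪ {(0,i)}_{i=⌊d/2⌋-⌈(d-1)/4⌉+1}^{⌊d/2⌋}` is 1-LOCC
indistinguishable. -/
theorem stmt_5 (d : ℕ) [NeZero d] (hd : 5 ≤ d) (hodd : Odd d) :
    ¬ ∃ α : ZMod d → ℂ, ip d α α = 1 ∧
      (∀ i : ℕ, i ≤ d - 1 → ip d α (pU d 1 (i : ZMod d) α) = 0) ∧
      (∀ i : ℕ, d / 2 - ⌈((d : ℚ) - 1) / 4⌉₊ + 1 ≤ i → i ≤ d / 2 →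
        ip d α (pU d 0 (i : ZMod d) α) = 0) := by
  classical
  rintro ⟨α, hnorm, h1, h2⟩
  obtain ⟨m, hdm⟩ := hodd
  have hm2 : 2 ≤ m := by omega
  have hd2 : d / 2 = m := by omega
  set t : ℕ := ⌈((d : ℚ) - 1) / 4⌉₊ with ht
  have hq : ((d : ℚ) - 1) / 4 = (m : ℚ) / 2 := by rw [hdm]; push_cast; ring
  have htm : t ≤ m := by
    rw [ht, hq, Nat.ceil_le]
    have : (0:ℚ) ≤ (m:ℚ) := by positivity
    linarith
  have hmt : m ≤ 2 * t := by
    have h : (m : ℚ) / 2 ≤ (t : ℚ) := by rw [ht, ← hq]; exact Nat.le_ceil _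
    have : (m : ℚ) ≤ 2 * t := by linarith
    exact_mod_cast this
  have hp := omega_prim d
  have h0 := omega_ne_zero d
  -- the weights
  set p : ZMod d → ℂ := fun k => (starRingEnd ℂ) (α k) * α k with hpdef
  have hconjp : ∀ k, (starRingEnd ℂ) (p k) = p k := by
    intro k; simp [hpdef, mul_comm]
  -- Step A: no two adjacent nonzero coordinates
  have hA : ∀ j : ZMod d, (starRingEnd ℂ) (α (j + 1)) * α j = 0 := by
    apply fourierZero
    intro i hi
    have hval : ((i : ZMod d)).val = i := ZMod.val_natCast_of_lt hi
    have h1i := h1 i (by omega)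
    unfold ip pU at h1i
    rw [← h1i]
    apply Fintype.sum_equiv (Equiv.addRight (1 : ZMod d))
    intro j
    simp only [Equiv.coe_addRight, add_sub_cancel_right, hval]
    rw [← zpow_natCast (ω d) (i * (ZMod.val j))]
    push_cast
    ring
  -- support
  set S : Finset (ZMod d) := Finset.univ.filter (fun k => α k ≠ 0) with hSdef
  have hadj : ∀ k ∈ S, k + 1 ∉ S := by
    intro k hk hk1
    rw [hSdef, Finset.mem_filter] at hk hk1
    rcases mul_eq_zero.mp (hA k) with h | h
    · exact hk1.2 (by simpa using h)
    · exact hk.2 h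
  have hcard := card_bound d S hadj
  have hsm : S.card ≤ m := by omega
  -- the function F
  set F : ℤ → ℂ := fun z => ∑ k : ZMod d, p k * ω d ^ (z * (k.val : ℤ)) with hFdef
  have hF0 : F 0 = 1 := by
    rw [hFdef]
    simp only [zero_mul, zpow_zero, mul_one]
    unfold ip at hnorm
    exact hnorm
  have hFper : ∀ z : ℤ, F (z + d) = F z := by
    intro z
    rw [hFdef]
    apply Finset.sum_congr rfl
    intro k _
    congr 1
    have hωd : ω d ^ ((d:ℤ) * (k.val:ℤ)) = 1 := by
      have hcast : ((d:ℤ) * (k.val:ℤ)) = ((d * k.val : ℕ) : ℤ) := by push_cast; ring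
      rw [hcast, zpow_natCast, pow_mul, hp.pow_eq_one, one_pow]
    rw [add_mul, zpow_add₀ h0, hωd, mul_one]
  have hFconj : ∀ z : ℤ, F (-z) = (starRingEnd ℂ) (F z) := by
    intro z
    rw [hFdef]
    simp only [map_sum, map_mul, hconjp, conj_omega_zpow, neg_mul]
  have hFwin : ∀ i : ℕ, m - t + 1 ≤ i → i ≤ m → F (i : ℤ) = 0 := by
    intro i hi1 hi2
    have hval : ((i : ZMod d)).val = i := ZMod.val_natCast_of_lt (by omega)
    have h2i := h2 i (by rw [hd2]; exact hi1) (by rw [hd2]; exact hi2)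
    unfold ip pU at h2i
    rw [← h2i, hFdef]
    apply Finset.sum_congr rfl
    intro k _
    simp only [sub_zero, hval]
    rw [← zpow_natCast (ω d) (i * (ZMod.val k))]
    push_cast
    ring
  have hFbig : ∀ z : ℤ, (m : ℤ) - t + 1 ≤ z → z ≤ (m : ℤ) + t → F z = 0 := by
    intro z hz1 hz2
    by_cases hzm : z ≤ (m : ℤ)
    · have hz0 : 0 ≤ z := by omega
      have : z = ((z.toNat : ℕ) : ℤ) := by omega
      rw [this]
      exact hFwin z.toNat (by omega) (by omega)
    · -- use periodicity and conjugation
      have hstep : F z = F (z - d) := by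
        have := hFper (z - d)
        rw [sub_add_cancel] at this
        exact this
      have hneg : F (z - d) = (starRingEnd ℂ) (F (d - z)) := by
        rw [show z - (d:ℤ) = -((d:ℤ) - z) by ring]
        exact hFconj _
      have hdz : ((d:ℤ) - z) = (((d - z.toNat : ℕ) : ℕ) : ℤ) := by omega
      rw [hstep, hneg, hdz, hFwin (d - z.toNat) (by omega) (by omega), map_zero]
  -- Vandermonde step
  set s : ℕ := S.card with hs
  set e : Fin s → S := fun k => S.equivFin.symm k with he
  set x : Fin s → ℂ := fun k => ω d ^ (((e k : ZMod d)).val) with hx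
  have hxinj : Function.Injective x := by
    intro a b hab
    have hval := hp.pow_inj (ZMod.val_lt _) (ZMod.val_lt _) hab
    have := ZMod.val_injective d hval
    exact S.equivFin.symm.injective (Subtype.ext this)
  set n0 : ℕ := m - t + 1 with hn0
  set v : Fin s → ℂ := fun k => p (e k) * ω d ^ ((n0 : ℤ) * (((e k : ZMod d)).val : ℤ)) with hv
  have hsum : ∀ j : Fin s, ∑ k, v k * x k ^ (j : ℕ) = 0 := by
    intro j
    have hterm : ∀ k : Fin s, v k * x k ^ (j : ℕ)
        = p (e k) * ω d ^ (((n0 : ℤ) + (j : ℕ)) * (((e k : ZMod d)).val : ℤ)) := by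
      intro k
      simp only [hv, hx]
      rw [← zpow_natCast (ω d) ((e k : ZMod d)).val, ← zpow_natCast (ω d ^ (((e k : ZMod d)).val : ℤ)) (j : ℕ), ← zpow_mul]
      rw [mul_assoc, ← zpow_add₀ h0]
      congr 2
      push_cast
      ring
    rw [Finset.sum_congr rfl (fun k _ => hterm k)]
    have hFval : F ((n0 : ℤ) + (j : ℕ)) = 0 := by
      apply hFbig <;> omega
    rw [← hFval]
    simp only [hFdef]
    -- sum over Fin s equals sum over all of ZMod d since p vanishes off S
    have hsub : ∑ k : ZMod d, p k * ω d ^ (((n0 : ℤ) + (j : ℕ)) * (k.val : ℤ))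
        = ∑ k ∈ S, p k * ω d ^ (((n0 : ℤ) + (j : ℕ)) * (k.val : ℤ)) := by
      symm
      apply Finset.sum_subset (Finset.subset_univ S)
      intro k _ hk
      rw [hSdef, Finset.mem_filter] at hk
      push_neg at hk
      have : α k = 0 := by
        by_contra hne
        exact hne (hk (Finset.mem_univ k))
      simp [hpdef, this]
    rw [hsub, ← Finset.sum_coe_sort S]
    exact Equiv.sum_comp (S.equivFin.symm)
      (fun k : S => p k * ω d ^ (((n0 : ℤ) + (j : ℕ)) * ((k : ZMod d).val : ℤ)))
  have hv0 := vandermonde_zero x hxinj v hsum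
  -- conclude p = 0 everywhere
  have hpzero : ∀ k : ZMod d, p k = 0 := by
    intro k
    by_cases hk : k ∈ S
    · have := hv0 (S.equivFin ⟨k, hk⟩)
      rw [hv] at this
      simp only [he, Equiv.symm_apply_apply] at this
      rcases mul_eq_zero.mp this with h | h
      · exact h
      · exact absurd h (zpow_ne_zero _ h0)
    · rw [hSdef, Finset.mem_filter] at hk
      push_neg at hk
      have : α k = 0 := by
        by_contra hne
        exact hne (hk (Finset.mem_univ k))
      simp [hpdef, this]
  have : F 0 = 0 := by
    rw [hFdef]
    apply Finset.sum_eq_zero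
    intro k _
    rw [hpzero k, zero_mul]
  rw [hF0] at this
  exact one_ne_zero this
end

section
/- Let d ≥ 5 be odd and let α ∈ ℂ^d. If ⟨α, X Z^i α⟩ = 0 for every i = 1, 2, …, d−1 and ⟨α, X² α⟩ = 0, then also ⟨α, X α⟩ = 0. (In other words: if the vector (α_j^* α_{j+1 mod d})_{j=0}^{d−1} is proportional to the all-ones vector, say equal to λ(1,…,1), and ⟨α, X² α⟩ = 0, then λ = 0.) -/
/-! With `c j = conj (α (j + 1)) * α j`, the numbers `⟨α, X Z^n α⟩` are `d` times the inverse
discrete Fourier transform of `c`, so their vanishing for `n ≠ 0` forces `c` to be a constant `λ`.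
If `λ ≠ 0`, no `α j` vanishes and `conj (α (j + 2)) * α j = λ² / |α (j + 1)|²`, whence
`⟨α, X² α⟩ = λ² ∑ⱼ |α (j + 1)|⁻² ≠ 0`. -/

open Complex

open ComplexConjugate ZMod

lemma ω_pow_eq_stdAddChar (d : ℕ) [NeZero d] (k : ℕ) : ω d ^ k = stdAddChar (k : ZMod d) := by
  rw [stdAddChar_apply, toCircle_natCast, ω, ← exp_nat_mul]
  ring_nf

lemma ω_pow_val_mul_val_eq_stdAddChar (d : ℕ) [NeZero d] (n j : ZMod d) :
    ω d ^ (n.val * j.val) = stdAddChar (n * j) := by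
  rw [ω_pow_eq_stdAddChar]
  push_cast
  simp only [natCast_zmod_val]

lemma ip_pU_eq_sum (d : ℕ) [NeZero d] (m n : ZMod d) (α : ZMod d → ℂ) :
    ip d α (pU d m n α) = ∑ j, stdAddChar (n * j) * (conj (α (j + m)) * α j) := by
  rw [ip, ← Equiv.sum_comp (Equiv.addRight m)]
  refine Finset.sum_congr rfl fun j _ => ?_
  simp only [Equiv.coe_addRight, pU, add_sub_cancel_right, ω_pow_val_mul_val_eq_stdAddChar]
  ring

lemma ip_pU_eq_invDFT (d : ℕ) [NeZero d] (m n : ZMod d) (α : ZMod d → ℂ) :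
    ip d α (pU d m n α) = d * 𝓕⁻ (fun j => conj (α (j + m)) * α j) n := by
  rw [ip_pU_eq_sum, invDFT_apply, smul_eq_mul, ← mul_assoc, mul_inv_cancel₀ (NeZero.ne _), one_mul]
  simp only [smul_eq_mul, mul_comm n]

lemma ZMod.eq_invDFT_zero_of_invDFT_eq_zero {N : ℕ} [NeZero N] {E : Type*} [AddCommGroup E]
    [Module ℂ E] {Φ : ZMod N → E} (h : ∀ n ≠ 0, 𝓕⁻ Φ n = 0) (k : ZMod N) : Φ k = 𝓕⁻ Φ 0 := by
  conv_lhs => rw [← LinearEquiv.apply_symm_apply 𝓕 Φ]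
  rw [dft_apply, Finset.sum_eq_single 0 (fun n _ hn => by rw [h n hn, smul_zero])
    (fun h => absurd (Finset.mem_univ 0) h)]
  simp

lemma eq_zero_of_conj_mul_eq_of_sum_conj_mul_eq_zero {ι : Type*} [Fintype ι] [Nonempty ι]
    {a : ι → ℂ} {σ : ι → ι} {c : ℂ} (hc : ∀ j, conj (a (σ j)) * a j = c)
    (hsum : ∑ j, conj (a (σ (σ j))) * a j = 0) : c = 0 := by
  by_contra hc0
  have ha : ∀ j, a j ≠ 0 := fun j haj => hc0 (by rw [← hc j, haj, mul_zero])
  have hterm : ∀ j, conj (a (σ (σ j))) * a j = c ^ 2 * ((normSq (a (σ j)))⁻¹ : ℝ) := by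
    intro j
    have hn : (normSq (a (σ j)) : ℂ) ≠ 0 := by simpa using ha (σ j)
    rw [ofReal_inv, eq_mul_inv_iff_mul_eq₀ hn, ← mul_conj]
    linear_combination conj (a (σ (σ j))) * a (σ j) * hc j + c * hc (σ j)
  have hpos : 0 < ∑ j, (normSq (a (σ j)))⁻¹ :=
    Finset.sum_pos (fun j _ => inv_pos.2 (normSq_pos.2 (ha _))) Finset.univ_nonempty
  simp only [hterm, ← Finset.mul_sum, ← ofReal_sum] at hsum
  exact hpos.ne' (by exact_mod_cast (mul_eq_zero.1 hsum).resolve_left (pow_ne_zero 2 hc0))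

theorem stmt_6_general (d : ℕ) [NeZero d] (α : ZMod d → ℂ)
    (h1 : ∀ i : ℕ, 1 ≤ i → i ≤ d - 1 → ip d α (pU d 1 (i : ZMod d) α) = 0)
    (h2 : ip d α (pU d 2 0 α) = 0) :
    ip d α (pU d 1 0 α) = 0 := by
  have hd_ne : (d : ℂ) ≠ 0 := NeZero.ne _
  have hinv : ∀ n ≠ 0, 𝓕⁻ (fun j => conj (α (j + 1)) * α j) n = 0 := by
    intro n hn
    have h := h1 n.val (Nat.one_le_iff_ne_zero.2 ((val_ne_zero n).2 hn))
      (Nat.le_sub_one_of_lt n.val_lt)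
    rw [natCast_zmod_val, ip_pU_eq_invDFT] at h
    exact (mul_eq_zero.1 h).resolve_left hd_ne
  rw [ip_pU_eq_sum, ← one_add_one_eq_two] at h2
  simp only [zero_mul, AddChar.map_zero_eq_one, one_mul, ← add_assoc] at h2
  rw [ip_pU_eq_invDFT, eq_zero_of_conj_mul_eq_of_sum_conj_mul_eq_zero (σ := (· + 1))
    (eq_invDFT_zero_of_invDFT_eq_zero hinv) h2, mul_zero]

/-- For odd `d ≥ 5`: if `⟨α, X Z^i α⟩ = 0` for all `i = 1,…,d-1` and
`⟨α, X² α⟩ = 0`, then also `⟨α, X α⟩ = 0`. -/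
theorem stmt_6 (d : ℕ) [NeZero d] (hd : 5 ≤ d) (hodd : Odd d) (α : ZMod d → ℂ)
    (h1 : ∀ i : ℕ, 1 ≤ i → i ≤ d - 1 → ip d α (pU d 1 (i : ZMod d) α) = 0)
    (h2 : ip d α (pU d 2 0 α) = 0) :
    ip d α (pU d 1 0 α) = 0 :=
  stmt_6_general d α h1 h2
end

section
/- Let d ≥ 5 be odd and let S = {(0,0), (2,0)} ∪ {(1, 2i−1) : i = 1, …, (d−1)/2} ⊆ ℤ/dℤ × ℤ/dℤ, a set of (d+3)/2 pairs. Then there is no unit vector α ∈ ℂ^d such that the vectors X^m Z^n α for (m,n) ∈ S are pairwise orthogonal; that is, the set of (d+3)/2 generalized Bell states {U_{m,n} : (m,n) ∈ S} in d⊗d is 1-LOCC indistinguishable, and hence f_GBS(d) ≤ (d+3)/2. -/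
open Complex

/-- The character `χ d j = ω^j` on `ZMod d`. -/
noncomputable def χ (d : ℕ) [NeZero d] (j : ZMod d) : ℂ := ω d ^ j.val

section chi

variable {d : ℕ} [NeZero d]

lemma homega : IsPrimitiveRoot (ω d) d := Complex.isPrimitiveRoot_exp d (NeZero.ne d)

lemma omega_pow_natCast (t : ℕ) : ω d ^ t = χ d (t : ZMod d) := by
  unfold χ
  rw [ZMod.val_natCast]
  conv_lhs => rw [← Nat.div_add_mod t d]
  rw [pow_add, pow_mul, homega.pow_eq_one, one_pow, one_mul]

lemma chi_add (a b : ZMod d) : χ d (a + b) = χ d a * χ d b := by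
  have : χ d a * χ d b = ω d ^ (a.val + b.val) := by rw [pow_add]; rfl
  rw [this, omega_pow_natCast]
  push_cast
  rw [ZMod.natCast_val, ZMod.natCast_val, ZMod.cast_id, ZMod.cast_id]

lemma chi_zero : χ d 0 = 1 := by simp [χ]

lemma chi_neg_mul (a : ZMod d) : χ d (-a) * χ d a = 1 := by
  rw [← chi_add, neg_add_cancel, chi_zero]

lemma chi_ne_zero (a : ZMod d) : χ d a ≠ 0 := by
  intro h
  have := chi_neg_mul a
  rw [h, mul_zero] at this
  exact one_ne_zero this.symm

lemma conj_chi (a : ZMod d) : (starRingEnd ℂ) (χ d a) = χ d (-a) := by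
  have h1 : (starRingEnd ℂ) (ω d) = (ω d)⁻¹ := by
    unfold ω
    rw [← Complex.exp_conj, ← Complex.exp_neg]
    congr 1
    simp only [map_div₀, map_mul, Complex.conj_I, Complex.conj_ofNat, map_natCast,
      Complex.conj_ofReal]
    ring
  have h2 : (starRingEnd ℂ) (χ d a) = (χ d a)⁻¹ := by
    unfold χ; rw [map_pow, h1, inv_pow]
  rw [h2]
  field_simp [chi_ne_zero]
  rw [← chi_add]
  simp [chi_zero]

lemma chi_injective : Function.Injective (χ d) := by
  intro a b h
  have := (homega (d := d)).pow_inj a.val_lt b.val_lt h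
  exact ZMod.val_injective d this

lemma sum_chi (j : ZMod d) : ∑ m : ZMod d, χ d (m * j) = if j = 0 then (d : ℂ) else 0 := by
  split_ifs with h
  · subst h; simp [chi_zero, ZMod.card]
  · have key : χ d j * ∑ m : ZMod d, χ d (m * j) = ∑ m : ZMod d, χ d (m * j) := by
      rw [Finset.mul_sum]
      refine Fintype.sum_equiv (Equiv.addRight 1) _ _ (fun m => ?_)
      rw [← chi_add]
      congr 1
      simp only [Equiv.coe_addRight]
      ring
    have hne : χ d j ≠ 1 := fun hc => h (chi_injective (by rw [hc, chi_zero]))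
    have h2 : (χ d j - 1) * ∑ m : ZMod d, χ d (m * j) = 0 := by
      rw [sub_mul, one_mul, key, sub_self]
    rcases mul_eq_zero.1 h2 with h3 | h3
    · exact absurd (sub_eq_zero.1 h3) hne
    · exact h3

lemma chi_sub (a b : ZMod d) : χ d (a - b) = χ d a * χ d (-b) := by
  rw [← chi_add, sub_eq_add_neg]

lemma inversion (g : ZMod d → ℂ) (j0 : ZMod d) :
    ∑ m : ZMod d, χ d (-(m * j0)) * ∑ k : ZMod d, χ d (m * k) * g k = d * g j0 := by
  have h1 : ∀ m : ZMod d, χ d (-(m * j0)) * ∑ k : ZMod d, χ d (m * k) * g k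
      = ∑ k : ZMod d, χ d (m * (k - j0)) * g k := by
    intro m
    rw [Finset.mul_sum]
    congr 1; funext k
    rw [← mul_assoc, ← chi_add]
    congr 2
    ring
  simp only [h1]
  rw [Finset.sum_comm]
  have h2 : ∀ k : ZMod d, ∑ m : ZMod d, χ d (m * (k - j0)) * g k
      = (if k - j0 = 0 then (d : ℂ) else 0) * g k := by
    intro k; rw [← Finset.sum_mul, sum_chi]
  simp only [h2]
  rw [Finset.sum_eq_single j0]
  · simp
  · intro k _ hk
    rw [if_neg (by simpa [sub_eq_zero] using hk), zero_mul]
  · simp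

lemma sum_shift (g : ZMod d → ℂ) (c : ZMod d) :
    ∑ k : ZMod d, g (k - c) = ∑ k : ZMod d, g k :=
  Fintype.sum_equiv (Equiv.subRight c) _ _ (fun _ => rfl)

lemma ip_pU (m n m' n' : ZMod d) (α : ZMod d → ℂ) :
    ip d (pU d m n α) (pU d m' n' α)
      = ∑ k : ZMod d, χ d (n' * (k - m') - n * (k - m))
          * ((starRingEnd ℂ) (α (k - m)) * α (k - m')) := by
  unfold ip pU
  congr 1; funext k
  rw [map_mul, omega_pow_natCast, omega_pow_natCast, conj_chi]
  push_cast
  rw [ZMod.natCast_val, ZMod.natCast_val, ZMod.natCast_val, ZMod.natCast_val,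
    ZMod.cast_id, ZMod.cast_id, ZMod.cast_id, ZMod.cast_id]
  rw [chi_sub (n' * (k - m'))]
  ring

end chi

/-- (Theorem 1 of the paper.) For odd `d ≥ 5`, the set
`S = {(0,0), (2,0)} ∪ {(1, 2i-1) : i = 1,…,(d-1)/2}` of `(d+3)/2` generalized
Bell states is 1-LOCC indistinguishable: there is no unit vector `α ∈ ℂ^d` for
which the vectors `X^m Z^n α`, `(m,n) ∈ S`, are pairwise orthogonal.
Hence `f_GBS(d) ≤ (d+3)/2`. -/
theorem stmt_7 (d : ℕ) [NeZero d] (hd : 5 ≤ d) (hodd : Odd d) :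
    ∃ S : Finset (ZMod d × ZMod d),
      S = ({((0 : ZMod d), (0 : ZMod d)), ((2 : ZMod d), (0 : ZMod d))} : Finset (ZMod d × ZMod d)) ∪
            (Finset.Icc 1 ((d - 1) / 2)).image
              (fun i : ℕ => ((1 : ZMod d), ((2 * i - 1 : ℕ) : ZMod d))) ∧
      S.card = (d + 3) / 2 ∧
      ¬ ∃ α : ZMod d → ℂ, ip d α α = 1 ∧
        ∀ p ∈ S, ∀ q ∈ S, p ≠ q → ip d (pU d p.1 p.2 α) (pU d q.1 q.2 α) = 0 := by
  haveI : Fact (1 < d) := ⟨by omega⟩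
  have hdodd2 : d % 2 = 1 := Nat.odd_iff.1 hodd
  -- basic val facts
  have hv1 : (1 : ZMod d).val = 1 := ZMod.val_one d
  have hv2 : (2 : ZMod d).val = 2 := by
    rw [show (2 : ZMod d) = ((2 : ℕ) : ZMod d) by norm_cast, ZMod.val_natCast,
      Nat.mod_eq_of_lt (by omega)]
  have hvm1 : (-1 : ZMod d).val = d - 1 := by
    haveI : NeZero (1 : ZMod d) := ⟨by
      intro h
      have := congrArg ZMod.val h
      rw [hv1, ZMod.val_zero] at this
      omega⟩
    rw [ZMod.val_neg_of_ne_zero, hv1]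
  have h1ne0 : (1 : ZMod d) ≠ 0 := by
    intro h; have := congrArg ZMod.val h; rw [hv1, ZMod.val_zero] at this; omega
  have h2ne0 : (2 : ZMod d) ≠ 0 := by
    intro h; have := congrArg ZMod.val h; rw [hv2, ZMod.val_zero] at this; omega
  have h1ne2 : (1 : ZMod d) ≠ 2 := by
    intro h; have := congrArg ZMod.val h; rw [hv1, hv2] at this; omega
  have h0ne2 : (0 : ZMod d) ≠ 2 := fun h => h2ne0 h.symm
  have hdC : (d : ℂ) ≠ 0 := Nat.cast_ne_zero.2 (NeZero.ne d)
  refine ⟨_, rfl, ?_, ?_⟩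
  · -- cardinality
    have hdisj : Disjoint
        ({((0 : ZMod d), (0 : ZMod d)), ((2 : ZMod d), (0 : ZMod d))} : Finset (ZMod d × ZMod d))
        ((Finset.Icc 1 ((d - 1) / 2)).image
          (fun i : ℕ => ((1 : ZMod d), ((2 * i - 1 : ℕ) : ZMod d)))) := by
      rw [Finset.disjoint_left]
      intro a ha hb
      obtain ⟨i, _, rfl⟩ := Finset.mem_image.1 hb
      simp only [Finset.mem_insert, Finset.mem_singleton, Prod.mk.injEq] at ha
      rcases ha with ⟨h, _⟩ | ⟨h, _⟩
      · exact h1ne0 h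
      · exact h1ne2 h
    have hinj : Set.InjOn (fun i : ℕ => ((1 : ZMod d), ((2 * i - 1 : ℕ) : ZMod d)))
        (Finset.Icc 1 ((d - 1) / 2)) := by
      intro i hi j hj h
      simp only [Finset.coe_Icc, Set.mem_Icc] at hi hj
      have h2 := congrArg (fun x => (Prod.snd x).val) h
      simp only at h2
      rw [ZMod.val_natCast, ZMod.val_natCast, Nat.mod_eq_of_lt (by omega),
        Nat.mod_eq_of_lt (by omega)] at h2
      omega
    rw [Finset.card_union_of_disjoint hdisj, Finset.card_image_of_injOn hinj,
      Finset.card_insert_of_notMem (by simp [Prod.ext_iff, h0ne2]),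
      Finset.card_singleton, Nat.card_Icc]
    omega
  · -- main indistinguishability statement
    rintro ⟨α, hnorm, horth⟩
    set p : ZMod d → ℂ := fun j => (starRingEnd ℂ) (α j) * α j with hpdef
    set b : ZMod d → ℂ := fun k => (starRingEnd ℂ) (α k) * α (k - 1) with hbdef
    have hsum_p : ∑ k : ZMod d, p k = 1 := hnorm
    -- membership facts
    have hmem00 : ((0 : ZMod d), (0 : ZMod d)) ∈
        ({((0 : ZMod d), (0 : ZMod d)), ((2 : ZMod d), (0 : ZMod d))} : Finset (ZMod d × ZMod d)) ∪
          (Finset.Icc 1 ((d - 1) / 2)).image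
            (fun i : ℕ => ((1 : ZMod d), ((2 * i - 1 : ℕ) : ZMod d))) := by simp
    have hmem20 : ((2 : ZMod d), (0 : ZMod d)) ∈
        ({((0 : ZMod d), (0 : ZMod d)), ((2 : ZMod d), (0 : ZMod d))} : Finset (ZMod d × ZMod d)) ∪
          (Finset.Icc 1 ((d - 1) / 2)).image
            (fun i : ℕ => ((1 : ZMod d), ((2 * i - 1 : ℕ) : ZMod d))) := by simp
    have hmem1 : ∀ m : ZMod d, Odd m.val → ((1 : ZMod d), m) ∈
        ({((0 : ZMod d), (0 : ZMod d)), ((2 : ZMod d), (0 : ZMod d))} : Finset (ZMod d × ZMod d)) ∪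
          (Finset.Icc 1 ((d - 1) / 2)).image
            (fun i : ℕ => ((1 : ZMod d), ((2 * i - 1 : ℕ) : ZMod d))) := by
      intro m hm
      apply Finset.mem_union_right
      apply Finset.mem_image.2
      have hlt : m.val < d := m.val_lt
      have hne : m.val ≠ d - 1 := by
        intro h
        rw [h] at hm
        rcases hm with ⟨t, ht⟩
        omega
      obtain ⟨t, ht⟩ := hm
      refine ⟨(m.val + 1) / 2, Finset.mem_Icc.2 ⟨by omega, by omega⟩, ?_⟩
      have h2 : 2 * ((m.val + 1) / 2) - 1 = m.val := by omega
      rw [h2, ZMod.natCast_val, ZMod.cast_id]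
    -- Relation A
    have hA : ∑ k : ZMod d, (starRingEnd ℂ) (α k) * α (k - 2) = 0 := by
      have h := horth _ hmem00 _ hmem20 (by simp [Prod.ext_iff, h0ne2])
      rw [ip_pU] at h
      simpa [chi_zero] using h
    -- Relation B : for odd-val m, ∑ χ(m k) b k = 0
    have hB : ∀ m : ZMod d, Odd m.val → ∑ k : ZMod d, χ d (m * k) * b k = 0 := by
      intro m hm
      have h := horth _ hmem00 _ (hmem1 m hm) (by
        simp only [ne_eq, Prod.mk.injEq, not_and]
        intro h; exact absurd h.symm h1ne0)
      rw [ip_pU] at h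
      simp only [zero_mul, sub_zero, mul_zero] at h
      -- h : ∑ k, χ (m * (k-1) - 0) * (conj (α (k-0)) * α (k-1)) = 0
      have key : ∀ k : ZMod d, χ d (m * k) * b k = χ d m * (χ d (m * (k - 1)) * b k) := by
        intro k
        have e : χ d (m * k) = χ d m * χ d (m * (k - 1)) := by
          rw [← chi_add]; congr 1; ring
        rw [e, mul_assoc]
      calc ∑ k : ZMod d, χ d (m * k) * b k
          = ∑ k : ZMod d, χ d m * (χ d (m * (k - 1)) * b k) :=
            Finset.sum_congr rfl (fun k _ => key k)
        _ = χ d m * ∑ k : ZMod d, χ d (m * (k - 1)) * b k := (Finset.mul_sum _ _ _).symm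
        _ = 0 := by
            have h2 : ∑ k : ZMod d, χ d (m * (k - 1)) * b k = 0 := h
            rw [h2, mul_zero]
    -- Relation C : for odd-val m, ∑ χ(m j) conj(b j) = 0 (in the form below)
    have hC : ∀ m : ZMod d, Odd m.val →
        ∑ j : ZMod d, χ d (m * j) * ((starRingEnd ℂ) (α (j - 1)) * α j) = 0 := by
      intro m hm
      have h := horth _ hmem20 _ (hmem1 m hm) (by
        simp only [ne_eq, Prod.mk.injEq, not_and]
        intro h; exact absurd h h1ne2.symm)
      rw [ip_pU] at h
      simp only [zero_mul, sub_zero, mul_zero] at h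
      -- h : ∑ k, χ (m * (k-1)) * (conj (α (k-2)) * α (k-1)) = 0
      rw [← sum_shift (fun j => χ d (m * j) * ((starRingEnd ℂ) (α (j - 1)) * α j)) 1, ← h]
      refine Finset.sum_congr rfl (fun k _ => ?_)
      show χ d (m * (k - 1)) * ((starRingEnd ℂ) (α (k - 1 - 1)) * α (k - 1))
          = χ d (m * (k - 1)) * ((starRingEnd ℂ) (α (k - 2)) * α (k - 1))
      rw [show (k : ZMod d) - 1 - 1 = k - 2 by ring]
    -- full B : for all m ≠ 0
    have hBfull : ∀ m : ZMod d, m ≠ 0 → ∑ k : ZMod d, χ d (m * k) * b k = 0 := by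
      intro m hm
      have hlt : m.val < d := m.val_lt
      have hvne : m.val ≠ 0 := fun h => hm (ZMod.val_injective d (by rw [h, ZMod.val_zero]))
      rcases Nat.even_or_odd m.val with he | ho
      · -- use conjugate of relation C at -m
        haveI : NeZero m := ⟨hm⟩
        have hneg : (-m).val = d - m.val := ZMod.val_neg_of_ne_zero m
        have hnegodd : Odd (-m).val := by
          rw [hneg, Nat.odd_iff]; rcases he with ⟨t, ht⟩; omega
        have hc := hC (-m) hnegodd
        have := congrArg (starRingEnd ℂ) hc
        rw [map_sum, map_zero] at this
        rw [← this]
        refine Finset.sum_congr rfl (fun k _ => ?_)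
        rw [map_mul, map_mul, conj_chi, Complex.conj_conj]
        rw [show -(-m * k) = m * k by ring]
        show χ d (m * k) * b k = _
        rw [hbdef]
        ring
      · exact hB m ho
    -- b is constant
    have hbconst : ∀ j : ZMod d, (d : ℂ) * b j = ∑ k : ZMod d, b k := by
      intro j
      rw [← inversion b j, Finset.sum_eq_single (0 : ZMod d)]
      · simp [chi_zero]
      · intro m _ hm
        rw [hBfull m hm, mul_zero]
      · simp
    have hbb : ∀ j : ZMod d, b j = b 0 := by
      intro j
      have := (hbconst j).trans (hbconst 0).symm
      exact mul_left_cancel₀ hdC this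
    -- Relation D (even case)
    have hDeven : ∀ m : ZMod d, Even m.val → 2 ≤ m.val → m.val ≤ d - 3 →
        ∑ k : ZMod d, χ d (m * k) * p k = 0 := by
      intro m heven h2 h3
      set n' : ZMod d := ((m.val + 1 : ℕ) : ZMod d) with hn'
      have hval' : n'.val = m.val + 1 := by
        rw [hn', ZMod.val_natCast, Nat.mod_eq_of_lt (by omega)]
      have hodd' : Odd n'.val := by
        rw [hval', Nat.odd_iff]; rcases heven with ⟨t, ht⟩; omega
      have hodd1 : Odd (1 : ZMod d).val := by rw [hv1]; exact odd_one
      have hne : ((1 : ZMod d), (1 : ZMod d)) ≠ ((1 : ZMod d), n') := by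
        intro h
        have := congrArg (fun x => (Prod.snd x).val) h
        simp only [hv1, hval'] at this
        omega
      have h := horth _ (hmem1 1 hodd1) _ (hmem1 n' hodd') hne
      rw [ip_pU] at h
      -- h : ∑ k, χ (n' * (k-1) - 1 * (k-1)) * (conj (α (k-1)) * α (k-1)) = 0
      have hm' : ∀ k : ZMod d, n' * (k - 1) - 1 * (k - 1) = m * (k - 1) := by
        intro k
        have : n' - 1 = m := by
          rw [hn']
          push_cast
          rw [ZMod.natCast_val, ZMod.cast_id]
          ring
        rw [← this]; ring
      simp only [hm'] at h
      rw [← sum_shift (fun j => χ d (m * j) * p j) 1]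
      exact h
    -- Relation D (all m ≠ 0, 1, -1)
    have hD : ∀ m : ZMod d, m ≠ 0 → m ≠ 1 → m ≠ -1 →
        ∑ k : ZMod d, χ d (m * k) * p k = 0 := by
      intro m hm0 hm1 hmm1
      have hlt : m.val < d := m.val_lt
      have hvne0 : m.val ≠ 0 := fun h => hm0 (ZMod.val_injective d (by rw [h, ZMod.val_zero]))
      have hvne1 : m.val ≠ 1 := fun h => hm1 (ZMod.val_injective d (by rw [h, hv1]))
      have hvnem1 : m.val ≠ d - 1 := fun h => hmm1 (ZMod.val_injective d (by rw [h, hvm1]))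
      have hconjp : ∀ k : ZMod d, (starRingEnd ℂ) (p k) = p k := by
        intro k
        rw [hpdef]
        simp only [map_mul, Complex.conj_conj]
        ring
      rcases Nat.even_or_odd m.val with he | ho
      · refine hDeven m he (by omega) (by rcases he with ⟨t, ht⟩; omega)
      · -- odd val: conjugate the relation at -m
        haveI : NeZero m := ⟨hm0⟩
        have hneg : (-m).val = d - m.val := ZMod.val_neg_of_ne_zero m
        have hnegeven : Even (-m).val := by
          rw [hneg, Nat.even_iff]; rcases ho with ⟨t, ht⟩; omega
        have hc := hDeven (-m) hnegeven (by rw [hneg]; rcases ho with ⟨t, ht⟩; omega)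
          (by rw [hneg]; rcases ho with ⟨t, ht⟩; omega)
        have hcc := congrArg (starRingEnd ℂ) hc
        rw [map_sum, map_zero] at hcc
        rw [← hcc]
        refine Finset.sum_congr rfl (fun k _ => ?_)
        rw [map_mul, conj_chi, hconjp, show -(-m * k) = m * k by ring]
    -- Fourier expansion of p
    have h0ne1 : (0 : ZMod d) ≠ 1 := fun h => h1ne0 h.symm
    have h0nem1 : (0 : ZMod d) ≠ -1 := by
      intro h
      have := congrArg ZMod.val h
      rw [ZMod.val_zero, hvm1] at this
      omega
    have h1nem1 : (1 : ZMod d) ≠ -1 := by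
      intro h
      have := congrArg ZMod.val h
      rw [hv1, hvm1] at this
      omega
    have hp4 : ∀ j : ZMod d, (d : ℂ) * p j
        = (∑ k : ZMod d, p k)
          + (χ d (-j) * (∑ k : ZMod d, χ d k * p k)
            + χ d j * (∑ k : ZMod d, χ d (-k) * p k)) := by
      intro j
      rw [← inversion p j]
      rw [← Finset.sum_subset (Finset.subset_univ ({0, 1, -1} : Finset (ZMod d)))
        (fun m _ hm => ?_)]
      · rw [Finset.sum_insert (by simp [h0ne1, h0nem1]),
          Finset.sum_insert (by simp [h1nem1]), Finset.sum_singleton]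
        simp only [zero_mul, neg_zero, chi_zero, one_mul, neg_mul, neg_neg]
      · simp only [Finset.mem_insert, Finset.mem_singleton, not_or] at hm
        rw [hD m hm.1 hm.2.1 hm.2.2, mul_zero]
    -- case split on b 0
    by_cases hb0 : b 0 = 0
    · -- degenerate case: no two adjacent coordinates both nonzero
      have hzz : ∀ k : ZMod d, α k = 0 ∨ α (k - 1) = 0 := by
        intro k
        have : b k = 0 := by rw [hbb k, hb0]
        rw [hbdef] at this
        rcases mul_eq_zero.1 this with h | h
        · left
          simpa using h
        · right; exact h
      set Z : Finset (ZMod d) := Finset.univ.filter (fun j => α j = 0) with hZ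
      have hcard : d ≤ 2 * Z.card := by
        have hmaps : ∀ k : ZMod d, k ∈ Finset.univ →
            (if α k = 0 then k else k - 1) ∈ Z := by
          intro k _
          rw [hZ, Finset.mem_filter]
          split_ifs with h
          · exact ⟨Finset.mem_univ _, h⟩
          · exact ⟨Finset.mem_univ _, (hzz k).resolve_left h⟩
        have hfib : ∀ a ∈ Z, (Finset.univ.filter
            (fun x : ZMod d => (if α x = 0 then x else x - 1) = a)).card ≤ 2 := by
          intro a _
          have hsub : Finset.univ.filter
              (fun x : ZMod d => (if α x = 0 then x else x - 1) = a)
              ⊆ ({a, a + 1} : Finset (ZMod d)) := by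
            intro x hx
            rw [Finset.mem_filter] at hx
            rcases hx with ⟨_, hx⟩
            simp only [Finset.mem_insert, Finset.mem_singleton]
            split_ifs at hx with h
            · left; exact hx
            · right
              rw [← hx]
              ring
          calc (Finset.univ.filter
              (fun x : ZMod d => (if α x = 0 then x else x - 1) = a)).card
              ≤ ({a, a + 1} : Finset (ZMod d)).card := Finset.card_le_card hsub
            _ ≤ 2 := Finset.card_insert_le _ _ |>.trans (by simp)
        have hmain := Finset.card_le_mul_card_image_of_maps_to hmaps 2 hfib
        rw [Finset.card_univ, ZMod.card] at hmain
        exact hmain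
      have hZ3 : 3 ≤ Z.card := by omega
      obtain ⟨T, hTZ, hT3⟩ := Finset.exists_subset_card_eq hZ3
      obtain ⟨z1, z2, z3, h12, h13, h23, rfl⟩ := Finset.card_eq_three.1 hT3
      have hz : ∀ z : ZMod d, z ∈ Z → p z = 0 := by
        intro z hzZ
        rw [hZ, Finset.mem_filter] at hzZ
        rw [hpdef]
        simp [hzZ.2]
      have hz1 : p z1 = 0 := hz z1 (hTZ (by simp))
      have hz2 : p z2 = 0 := hz z2 (hTZ (by simp))
      have hz3 : p z3 = 0 := hz z3 (hTZ (by simp))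
      have equad : ∀ z : ZMod d, p z = 0 →
          (∑ k : ZMod d, χ d k * p k)
            + 1 * χ d z
            + (∑ k : ZMod d, χ d (-k) * p k) * (χ d z * χ d z) = 0 := by
        intro z hpz
        have h4 := hp4 z
        rw [hpz, mul_zero, hsum_p] at h4
        have hmul := chi_neg_mul z
        linear_combination (-(χ d z)) * h4 - (∑ k : ZMod d, χ d k * p k) * hmul
      have e1 := equad z1 hz1
      have e2 := equad z2 hz2
      have e3 := equad z3 hz3
      have hx12 : χ d z1 - χ d z2 ≠ 0 := sub_ne_zero.2 (fun h => h12 (chi_injective h))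
      have hx13 : χ d z1 - χ d z3 ≠ 0 := sub_ne_zero.2 (fun h => h13 (chi_injective h))
      have hx23 : χ d z2 - χ d z3 ≠ 0 := sub_ne_zero.2 (fun h => h23 (chi_injective h))
      have key : (χ d z1 - χ d z2) * (χ d z2 - χ d z3) * (χ d z3 - χ d z1) = 0 := by
        linear_combination (χ d z2 ^ 2 - χ d z3 ^ 2) * e1 + (χ d z3 ^ 2 - χ d z1 ^ 2) * e2
          + (χ d z1 ^ 2 - χ d z2 ^ 2) * e3
      rcases mul_eq_zero.1 key with h | h
      · rcases mul_eq_zero.1 h with h | h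
        · exact hx12 h
        · exact hx23 h
      · exact hx13 (by linear_combination -h)
    · -- nondegenerate case: all coordinates nonzero
      have hbt : ∀ k : ZMod d, b k = b 0 := hbb
      have hαne : ∀ k : ZMod d, α k ≠ 0 := by
        intro k hk
        apply hb0
        rw [← hbt (k + 1)]
        rw [hbdef]
        simp only [add_sub_cancel_right]
        rw [hk, mul_zero]
      have hpne : ∀ k : ZMod d, p k ≠ 0 := by
        intro k
        rw [hpdef]
        exact mul_ne_zero (by simpa using hαne k) (hαne k)
      have hbp : ∀ k : ZMod d, (starRingEnd ℂ) (b k) * b k = p k * p (k - 1) := by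
        intro k
        rw [hbdef, hpdef]
        simp only [map_mul, Complex.conj_conj]
        ring
      have h2step : ∀ j : ZMod d, p (j + 2) = p j := by
        intro j
        have e1 := hbp (j + 2)
        have e2 := hbp (j + 1)
        rw [hbt (j + 2)] at e1
        rw [hbt (j + 1)] at e2
        rw [show (j : ZMod d) + 2 - 1 = j + 1 by ring] at e1
        rw [show (j : ZMod d) + 1 - 1 = j by ring] at e2
        have := e1.symm.trans e2
        -- p (j+2) * p (j+1) = p (j+1) * p j
        rw [mul_comm (p (j + 1)) (p j)] at this
        exact mul_right_cancel₀ (hpne (j + 1)) this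
      have hshift : ∀ (t : ℕ) (j : ZMod d), p (j + ((2 * t : ℕ) : ZMod d)) = p j := by
        intro t
        induction t with
        | zero => intro j; simp
        | succ t ih =>
          intro j
          have hcast : ((2 * (t + 1) : ℕ) : ZMod d) = ((2 * t : ℕ) : ZMod d) + 2 := by
            push_cast; ring
          rw [hcast, ← add_assoc, show j + ((2 * t : ℕ) : ZMod d) + 2
            = (j + ((2 * t : ℕ) : ZMod d)) + 2 from rfl, h2step, ih]
      have hpconst : ∀ j : ZMod d, p j = p 0 := by
        intro j
        have hu : IsUnit (2 : ZMod d) := by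
          have : IsUnit ((2 : ℕ) : ZMod d) :=
            (ZMod.isUnit_iff_coprime 2 d).2 hodd.coprime_two_left
          simpa using this
        have hinv : (2 : ZMod d) * 2⁻¹ = 1 := ZMod.mul_inv_of_unit 2 hu
        have h2m : ((2 * ((2⁻¹ : ZMod d) * j).val : ℕ) : ZMod d) = j := by
          push_cast
          rw [ZMod.natCast_val, ZMod.cast_id, ← mul_assoc, hinv, one_mul]
        have := hshift ((2⁻¹ * j : ZMod d)).val 0
        rw [h2m, zero_add] at this
        exact this
      -- conclude contradiction from relation A
      have hkey : ∀ k : ZMod d, ((starRingEnd ℂ) (α k) * α (k - 2)) * p (k - 1)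
          = b 0 * b 0 := by
        intro k
        have : ((starRingEnd ℂ) (α k) * α (k - 2)) * p (k - 1) = b k * b (k - 1) := by
          rw [hbdef, hpdef]
          simp only
          rw [show (k : ZMod d) - 1 - 1 = k - 2 by ring]
          ring
        rw [this, hbt k, hbt (k - 1)]
      have hsum : (∑ k : ZMod d, (starRingEnd ℂ) (α k) * α (k - 2)) * p 0
          = (d : ℂ) * (b 0 * b 0) := by
        rw [Finset.sum_mul]
        calc ∑ k : ZMod d, ((starRingEnd ℂ) (α k) * α (k - 2)) * p 0
            = ∑ k : ZMod d, b 0 * b 0 := by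
              refine Finset.sum_congr rfl (fun k _ => ?_)
              rw [← hkey k, hpconst (k - 1)]
          _ = (d : ℂ) * (b 0 * b 0) := by
              rw [Finset.sum_const, Finset.card_univ, ZMod.card, nsmul_eq_mul]
      rw [hA, zero_mul] at hsum
      have : b 0 * b 0 = 0 := by
        rcases mul_eq_zero.1 hsum.symm with h | h
        · exact absurd h hdC
        · exact h
      rcases mul_eq_zero.1 this with h | h <;> exact hb0 h
end

section
/- Let d ≥ 9 be odd and let m ≥ 1 be an integer. Define S^d(m) = {(0, i) : 0 ≤ i ≤ m−1} ∪ {(1, (im−1) mod d) : 1 ≤ i ≤ ⌈d/m⌉} ∪ {(0, ((d−1)/2 − im) mod d) : 0 ≤ i ≤ ⌈⌈(d−1)/4⌉/m⌉ − 1} ⊆ ℤ/dℤ × ℤ/dℤ. Then there is no unit vector α ∈ ℂ^d such that the vectors X^a Z^b α for (a,b) ∈ S^d(m) are pairwise orthogonal; that is, the set of generalized Bell states {U_{a,b} : (a,b) ∈ S^d(m)} is 1-LOCC indistinguishable. -/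
open Complex Finset

lemma aux_geom (d : ℕ) {ζ : ℂ} (hζ : IsPrimitiveRoot ζ d)
    (r : ℤ) (hr : ¬ ((d:ℤ) ∣ r)) : ∑ n ∈ Finset.range d, ζ ^ (r * (n:ℤ)) = 0 := by
  have hx1 : ζ ^ r ≠ 1 := by
    simp only [ne_eq, hζ.zpow_eq_one_iff_dvd]; exact hr
  have : ∀ n ∈ Finset.range d, ζ ^ (r * (n:ℤ)) = (ζ ^ r) ^ n := by
    intro n _
    rw [← zpow_natCast (ζ ^ r) n, ← zpow_mul]
  rw [Finset.sum_congr rfl this, geom_sum_eq hx1]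
  have : (ζ ^ r) ^ d = 1 := by
    rw [← zpow_natCast (ζ ^ r) d, ← zpow_mul, mul_comm, zpow_mul, zpow_natCast, hζ.pow_eq_one, one_zpow]
  rw [this, sub_self, zero_div]

lemma aux_inv (d : ℕ) [NeZero d] {ζ : ℂ} (hζ : IsPrimitiveRoot ζ d) (hζ0 : ζ ≠ 0)
    (g : ZMod d → ℂ) (k : ZMod d) :
    ∑ n ∈ Finset.range d, (∑ j : ZMod d, g j * ζ ^ ((n:ℤ) * (j.val:ℤ))) * ζ ^ (-((n:ℤ) * (k.val:ℤ)))
      = d * g k := by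
  have hswap : ∑ n ∈ Finset.range d, (∑ j : ZMod d, g j * ζ ^ ((n:ℤ) * (j.val:ℤ))) * ζ ^ (-((n:ℤ) * (k.val:ℤ)))
      = ∑ j : ZMod d, ∑ n ∈ Finset.range d, g j * ζ ^ (((j.val:ℤ) - (k.val:ℤ)) * (n:ℤ)) := by
    rw [Finset.sum_comm]
    refine Finset.sum_congr rfl fun j _ => ?_
    rw [Finset.sum_mul]
    refine Finset.sum_congr rfl fun n _ => ?_
    rw [mul_assoc, ← zpow_add₀ hζ0]
    ring_nf
  rw [hswap]
  have hin : ∀ j : ZMod d, ∑ n ∈ Finset.range d, g j * ζ ^ (((j.val:ℤ) - (k.val:ℤ)) * (n:ℤ))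
      = if j = k then (d:ℂ) * g j else 0 := by
    intro j
    rw [← Finset.mul_sum]
    by_cases h : j = k
    · subst h
      simp [sub_self, zero_mul, mul_comm]
    · rw [if_neg h]
      have hdvd : ¬ ((d:ℤ) ∣ ((j.val:ℤ) - (k.val:ℤ))) := by
        intro hdvd
        apply h
        have : ((j.val : ℤ) : ZMod d) = ((k.val : ℤ) : ZMod d) := by
          rw [ZMod.intCast_eq_intCast_iff]
          exact Int.ModEq.symm (Int.modEq_iff_dvd.2 hdvd)
        simpa [ZMod.natCast_val, ZMod.cast_id] using this
      rw [aux_geom d hζ _ hdvd, mul_zero]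
  rw [Finset.sum_congr rfl fun j _ => hin j]
  simp

set_option maxHeartbeats 1000000 in
/-- (Lemma 3 of the paper.) For odd `d ≥ 9` and `m ≥ 1`, the set
`S^d(m) = {(0,i)}_{i=0}^{m-1} ∪ {(1, im-1)}_{i=1}^{⌈d/m⌉}
  ∪ {(0, (d-1)/2 - im)}_{i=0}^{⌈⌈(d-1)/4⌉/m⌉ - 1}`
of generalized Bell states is 1-LOCC indistinguishable: there is no unit vector
`α ∈ ℂ^d` for which the vectors `X^a Z^b α`, `(a,b) ∈ S^d(m)`, are pairwise
orthogonal. -/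
theorem stmt_9 (d : ℕ) [NeZero d] (hd : 9 ≤ d) (hodd : Odd d)
    (m : ℕ) (hm : 1 ≤ m) :
    ∃ S : Finset (ZMod d × ZMod d),
      S = (Finset.range m).image (fun i : ℕ => ((0 : ZMod d), (i : ZMod d))) ∪
          (Finset.Icc 1 ⌈(d : ℚ) / (m : ℚ)⌉₊).image
            (fun i : ℕ => ((1 : ZMod d), ((i * m - 1 : ℕ) : ZMod d))) ∪
          (Finset.range ⌈(⌈((d : ℚ) - 1) / 4⌉₊ : ℚ) / (m : ℚ)⌉₊).image
            (fun i : ℕ => ((0 : ZMod d),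
              (((((d - 1) / 2 : ℕ) : ℤ) - (i : ℤ) * (m : ℤ) : ℤ) : ZMod d))) ∧
      ¬ ∃ α : ZMod d → ℂ, ip d α α = 1 ∧
        ∀ p ∈ S, ∀ q ∈ S, p ≠ q → ip d (pU d p.1 p.2 α) (pU d q.1 q.2 α) = 0 := by
  classical
  refine ⟨_, rfl, ?_⟩
  rintro ⟨α, hnorm, horth⟩
  -- numeric setup
  set c : ℕ := (d - 1) / 2 with hcdef
  obtain ⟨e, he⟩ := hodd
  have hd2c : d = 2 * c + 1 := by omega
  set K : ℕ := ⌈(((d:ℚ) - 1) / 4 : ℚ)⌉₊ with hKdef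
  have hm0 : (0:ℚ) < (m:ℚ) := by exact_mod_cast hm
  have h4K : d - 1 ≤ 4 * K := by
    have h1 : ((d:ℚ) - 1) / 4 ≤ (K:ℚ) := Nat.le_ceil _
    have h2 : ((d:ℚ) - 1) ≤ 4 * K := by linarith
    have h3 : ((d:ℚ)) ≤ 4 * K + 1 := by linarith
    exact_mod_cast by
      have : (d:ℚ) ≤ ((4 * K + 1 : ℕ) : ℚ) := by push_cast; linarith
      have hd4 : d ≤ 4 * K + 1 := by exact_mod_cast this
      omega
  have hKc : K ≤ c := by
    rw [hKdef]
    rw [Nat.ceil_le]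
    have : ((d:ℚ) - 1) = 2 * c := by
      have : (d:ℕ) = 2*c+1 := hd2c
      push_cast [this]; ring
    rw [this]
    rw [div_le_iff₀ (by norm_num : (0:ℚ) < 4)]
    have hc0 : (0:ℚ) ≤ (c:ℚ) := by positivity
    linarith
  have hK2 : 2 ≤ K := by
    rw [hKdef]
    have : (1:ℕ) < ⌈(((d:ℚ) - 1) / 4 : ℚ)⌉₊ := by
      rw [Nat.lt_ceil]
      rw [lt_div_iff₀ (by norm_num : (0:ℚ) < 4)]
      have : (9:ℚ) ≤ (d:ℚ) := by exact_mod_cast hd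
      push_cast
      linarith
    omega
  set L : ℕ := c - K with hLdef
  have h2Lc : 2 * L ≤ c := by omega
  have hLK : L + K = c := by omega
  clear_value L K c
  -- root of unity setup
  have hζ : IsPrimitiveRoot (ω d) d := Complex.isPrimitiveRoot_exp d (NeZero.ne d)
  have hζ0 : ω d ≠ 0 := Complex.exp_ne_zero _
  have hconjζ : (starRingEnd ℂ) (ω d) = (ω d)⁻¹ := by
    refine eq_inv_of_mul_eq_one_left ?_
    rw [ω, ← Complex.exp_conj, ← Complex.exp_add]
    have : (starRingEnd ℂ) (2 * (Real.pi:ℂ) * Complex.I / d) + 2 * (Real.pi:ℂ) * Complex.I / d = 0 := by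
      rw [map_div₀, map_mul, map_mul, Complex.conj_I, Complex.conj_ofReal, map_ofNat, map_natCast]
      ring
    rw [this, Complex.exp_zero]
  have hconj : ∀ s : ℤ, (starRingEnd ℂ) ((ω d) ^ s) = (ω d) ^ (-s) := by
    intro s
    rw [map_zpow₀, hconjζ, inv_zpow, ← zpow_neg]
  have hz : ∀ a b : ℤ, ((a : ZMod d) = (b : ZMod d)) → (ω d) ^ a = (ω d) ^ b := by
    intro a b hab
    have hdvd : (d:ℤ) ∣ b - a := Int.ModEq.dvd ((ZMod.intCast_eq_intCast_iff a b d).1 hab)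
    rw [show b = a + (b - a) by ring, zpow_add₀ hζ0, (hζ.zpow_eq_one_iff_dvd _).2 hdvd, mul_one]
  -- basic functions
  set β : ZMod d → ℂ := fun j => ((Complex.normSq (α j) : ℝ) : ℂ) with hβ
  set γ : ZMod d → ℂ := fun j => (starRingEnd ℂ) (α (j+1)) * α j with hγ
  set F : ℤ → ℂ := fun s => ∑ j : ZMod d, β j * (ω d) ^ (s * (j.val:ℤ)) with hF
  set G : ℤ → ℂ := fun s => ∑ j : ZMod d, γ j * (ω d) ^ (s * (j.val:ℤ)) with hG
  have hFc : ∀ a b : ℤ, ((a : ZMod d) = (b : ZMod d)) → F a = F b := by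
    intro a b hab
    rw [hF]
    refine Finset.sum_congr rfl fun j _ => ?_
    congr 1
    apply hz
    push_cast
    rw [hab]
  have hGc : ∀ a b : ℤ, ((a : ZMod d) = (b : ZMod d)) → G a = G b := by
    intro a b hab
    rw [hG]
    refine Finset.sum_congr rfl fun j _ => ?_
    congr 1
    apply hz
    push_cast
    rw [hab]
  have hFsymm : ∀ s : ℤ, F (-s) = (starRingEnd ℂ) (F s) := by
    intro s
    rw [hF, map_sum]
    refine Finset.sum_congr rfl fun j _ => ?_
    rw [map_mul, hconj, Complex.conj_ofReal, neg_mul]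
  -- expansion of inner products
  have hA : ∀ b1 b2 : ZMod d, ip d (pU d 0 b1 α) (pU d 0 b2 α) = F ((b2.val:ℤ) - (b1.val:ℤ)) := by
    intro b1 b2
    rw [ip, hF]
    refine Finset.sum_congr rfl fun j _ => ?_
    rw [pU, pU, sub_zero]
    calc (starRingEnd ℂ) (ω d ^ (b1.val * j.val) * α j) * (ω d ^ (b2.val * j.val) * α j)
        = ((starRingEnd ℂ) (α j) * α j) *
            ((starRingEnd ℂ) ((ω d) ^ ((b1.val * j.val : ℕ):ℤ)) * (ω d) ^ ((b2.val * j.val : ℕ):ℤ)) := by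
          rw [map_mul]; rw [zpow_natCast, zpow_natCast]; ring
      _ = β j * (ω d) ^ (((b2.val:ℤ) - (b1.val:ℤ)) * (j.val:ℤ)) := by
          rw [hconj, ← zpow_add₀ hζ0]
          congr 1
          · rw [hβ]; exact (Complex.normSq_eq_conj_mul_self).symm
          · congr 1; push_cast; ring
  have hB : ∀ b1 b2 : ZMod d, ip d (pU d 0 b1 α) (pU d 1 b2 α)
      = (ω d) ^ (-(b1.val:ℤ)) * G ((b2.val:ℤ) - (b1.val:ℤ)) := by
    intro b1 b2
    rw [ip, hG, Finset.mul_sum]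
    rw [← Fintype.sum_equiv (Equiv.addRight (1 : ZMod d))
      (fun j => (starRingEnd ℂ) (pU d 0 b1 α (j+1)) * (pU d 1 b2 α (j+1)))
      (fun k => (starRingEnd ℂ) (pU d 0 b1 α k) * (pU d 1 b2 α k)) (fun x => rfl)]
    refine Finset.sum_congr rfl fun j _ => ?_
    rw [pU, pU, sub_zero, add_sub_cancel_right]
    calc (starRingEnd ℂ) (ω d ^ (b1.val * (j+1).val) * α (j+1)) * (ω d ^ (b2.val * j.val) * α j)
        = ((starRingEnd ℂ) (α (j+1)) * α j) *
            ((starRingEnd ℂ) ((ω d) ^ ((b1.val * (j+1).val : ℕ):ℤ)) * (ω d) ^ ((b2.val * j.val : ℕ):ℤ)) := by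
          rw [map_mul]; rw [zpow_natCast, zpow_natCast]; ring
      _ = γ j * (ω d) ^ ((-(b1.val:ℤ)) + ((b2.val:ℤ) - (b1.val:ℤ)) * (j.val:ℤ)) := by
          rw [hconj, ← zpow_add₀ hζ0, hγ]
          congr 1
          apply hz
          push_cast [ZMod.natCast_val, ZMod.cast_id]
          ring
      _ = (ω d) ^ (-(b1.val:ℤ)) * (γ j * (ω d) ^ (((b2.val:ℤ) - (b1.val:ℤ)) * (j.val:ℤ))) := by
          rw [zpow_add₀ hζ0]; ring
  -- memberships
  have hmem1 : ∀ j : ℕ, j < m →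
      ((0 : ZMod d), (j : ZMod d)) ∈
        (Finset.range m).image (fun i : ℕ => ((0 : ZMod d), (i : ZMod d))) ∪
          (Finset.Icc 1 ⌈(d : ℚ) / (m : ℚ)⌉₊).image
            (fun i : ℕ => ((1 : ZMod d), ((i * m - 1 : ℕ) : ZMod d))) ∪
          (Finset.range ⌈((K:ℚ)) / (m : ℚ)⌉₊).image
            (fun i : ℕ => ((0 : ZMod d),
              ((((c : ℕ) : ℤ) - (i : ℤ) * (m : ℤ) : ℤ) : ZMod d))) := by
    intro j hj
    exact Finset.mem_union.2 (Or.inl (Finset.mem_union.2 (Or.inl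
      (Finset.mem_image.2 ⟨j, Finset.mem_range.2 hj, rfl⟩))))
  have hmem2 : ∀ i : ℕ, 1 ≤ i → i ≤ ⌈(d : ℚ) / (m : ℚ)⌉₊ →
      ((1 : ZMod d), ((i * m - 1 : ℕ) : ZMod d)) ∈
        (Finset.range m).image (fun i : ℕ => ((0 : ZMod d), (i : ZMod d))) ∪
          (Finset.Icc 1 ⌈(d : ℚ) / (m : ℚ)⌉₊).image
            (fun i : ℕ => ((1 : ZMod d), ((i * m - 1 : ℕ) : ZMod d))) ∪
          (Finset.range ⌈((K:ℚ)) / (m : ℚ)⌉₊).image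
            (fun i : ℕ => ((0 : ZMod d),
              ((((c : ℕ) : ℤ) - (i : ℤ) * (m : ℤ) : ℤ) : ZMod d))) := by
    intro i h1 h2
    exact Finset.mem_union.2 (Or.inl (Finset.mem_union.2 (Or.inr
      (Finset.mem_image.2 ⟨i, Finset.mem_Icc.2 ⟨h1, h2⟩, rfl⟩))))
  have hmem3 : ∀ i : ℕ, i < ⌈((K:ℚ)) / (m : ℚ)⌉₊ →
      ((0 : ZMod d), ((((c : ℕ) : ℤ) - (i : ℤ) * (m : ℤ) : ℤ) : ZMod d)) ∈
        (Finset.range m).image (fun i : ℕ => ((0 : ZMod d), (i : ZMod d))) ∪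
          (Finset.Icc 1 ⌈(d : ℚ) / (m : ℚ)⌉₊).image
            (fun i : ℕ => ((1 : ZMod d), ((i * m - 1 : ℕ) : ZMod d))) ∪
          (Finset.range ⌈((K:ℚ)) / (m : ℚ)⌉₊).image
            (fun i : ℕ => ((0 : ZMod d),
              ((((c : ℕ) : ℤ) - (i : ℤ) * (m : ℤ) : ℤ) : ZMod d))) := by
    intro i hi
    exact Finset.mem_union.2 (Or.inr (Finset.mem_image.2 ⟨i, Finset.mem_range.2 hi, rfl⟩))
  haveI : Fact (1 < d) := ⟨by omega⟩
  -- G vanishes everywhere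
  have hGzero : ∀ r : ℕ, r < d → G (r:ℤ) = 0 := by
    intro r hr
    set i : ℕ := (r + m) / m with hidef
    set jn : ℕ := i * m - (r + 1) with hjdef
    have hdm := Nat.div_add_mod (r + m) m
    have hmod := Nat.mod_lt (r + m) (show 0 < m by omega)
    have he1 : i * m = m * ((r + m) / m) := by rw [hidef, Nat.mul_comm]
    have him : r + 1 ≤ i * m := by omega
    have him2 : i * m ≤ r + m := by omega
    have hjm : jn < m := by omega
    have hkey : i * m - 1 = r + jn := by omega
    have hi1 : 1 ≤ i := by
      rcases Nat.eq_zero_or_pos i with h | h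
      · rw [h] at him; omega
      · exact h
    have hi2 : i ≤ ⌈(d : ℚ) / (m : ℚ)⌉₊ := by
      have h5 : (i - 1) * m = i * m - m := by rw [Nat.sub_mul, one_mul]
      have h7 : (i - 1) * m < d := by omega
      have : i - 1 < ⌈(d : ℚ) / (m : ℚ)⌉₊ := by
        rw [Nat.lt_ceil, lt_div_iff₀ hm0]
        exact_mod_cast h7
      omega
    have hp := hmem1 jn hjm
    have hq := hmem2 i hi1 hi2
    have hne : ((0 : ZMod d), ((jn : ℕ) : ZMod d)) ≠ ((1 : ZMod d), ((i * m - 1 : ℕ) : ZMod d)) := by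
      intro h
      have := congrArg Prod.fst h
      simp only at this
      exact zero_ne_one this
    have horth1 := horth _ hp _ hq hne
    simp only at horth1
    rw [hB] at horth1
    have hG0 : G ((((i * m - 1 : ℕ) : ZMod d)).val - (((jn : ℕ) : ZMod d)).val : ℤ) = 0 := by
      rcases mul_eq_zero.1 horth1 with h | h
      · exact absurd h (zpow_ne_zero _ hζ0)
      · exact h
    have hres : ((((((i * m - 1 : ℕ) : ZMod d)).val - (((jn : ℕ) : ZMod d)).val : ℤ)) : ZMod d)
        = (((r:ℕ):ℤ) : ZMod d) := by
      push_cast [ZMod.natCast_val, ZMod.cast_id]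
      rw [hkey]
      push_cast
      ring
    rw [hGc _ _ hres] at hG0
    exact hG0
  -- gamma vanishes
  have hgamma : ∀ k : ZMod d, (starRingEnd ℂ) (α (k+1)) * α k = 0 := by
    intro k
    have hinv := aux_inv d hζ hζ0 γ k
    have hzz : ∀ n ∈ Finset.range d,
        (∑ j : ZMod d, γ j * (ω d) ^ ((n:ℤ) * (j.val:ℤ))) * (ω d) ^ (-((n:ℤ)*(k.val:ℤ))) = 0 := by
      intro n hn
      have : (∑ j : ZMod d, γ j * (ω d) ^ ((n:ℤ) * (j.val:ℤ))) = G (n:ℤ) := by rw [hG]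
      rw [this, hGzero n (Finset.mem_range.1 hn), zero_mul]
    rw [Finset.sum_congr rfl hzz, Finset.sum_const_zero] at hinv
    have hd0 : (d:ℂ) ≠ 0 := Nat.cast_ne_zero.2 (NeZero.ne d)
    have := (mul_eq_zero.1 hinv.symm).resolve_left hd0
    rw [hγ] at this
    exact this
  -- band zeros of F
  have hFband : ∀ n : ℕ, L + 1 ≤ n → n ≤ c → F (n:ℤ) = 0 := by
    intro n h1 h2
    set k : ℕ := c - n with hkdef
    have hkK : k < K := by omega
    set i : ℕ := k / m with hidef
    set jn : ℕ := k % m with hjdef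
    have hdm := Nat.div_add_mod k m
    have hjm : jn < m := Nat.mod_lt _ (by omega)
    have he1 : i * m = m * (k / m) := by rw [hidef, Nat.mul_comm]
    have hik : i * m + jn = k := by rw [hjdef]; omega
    have hit : i < ⌈((K:ℚ)) / (m : ℚ)⌉₊ := by
      rw [Nat.lt_ceil, lt_div_iff₀ hm0]
      have : i * m < K := by omega
      exact_mod_cast this
    have hp := hmem1 jn hjm
    have hq := hmem3 i hit
    have hcge : jn + i * m + n = c := by omega
    have hne : ((0 : ZMod d), ((jn : ℕ) : ZMod d))
        ≠ ((0 : ZMod d), ((((c : ℕ) : ℤ) - (i : ℤ) * (m : ℤ) : ℤ) : ZMod d)) := by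
      intro h
      have h2' : ((jn : ℕ) : ZMod d) = ((((c : ℕ) : ℤ) - (i : ℤ) * (m : ℤ) : ℤ) : ZMod d) :=
        congrArg Prod.snd h
      have e2 : (c:ℤ) - (i:ℤ) * (m:ℤ) - (jn:ℤ) = (n:ℤ) := by push_cast [← hcge]; ring
      have hval : ((n : ℕ) : ZMod d) = 0 := by
        calc ((n:ℕ) : ZMod d) = (((c:ℤ) - (i:ℤ)*(m:ℤ) - (jn:ℤ) : ℤ) : ZMod d) := by
              rw [e2]; push_cast; ring
          _ = ((((c : ℕ) : ℤ) - (i : ℤ) * (m : ℤ) : ℤ) : ZMod d) - ((jn:ℕ) : ZMod d) := by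
              push_cast; ring
          _ = ((jn:ℕ) : ZMod d) - ((jn:ℕ) : ZMod d) := by rw [← h2']
          _ = 0 := sub_self _
      rw [ZMod.natCast_eq_zero_iff] at hval
      have := Nat.le_of_dvd (by omega) hval
      omega
    have horth1 := horth _ hp _ hq hne
    simp only at horth1
    rw [hA] at horth1
    have hres : (((((((c : ℕ) : ℤ) - (i : ℤ) * (m : ℤ) : ℤ) : ZMod d)).val
        - (((jn : ℕ) : ZMod d)).val : ℤ) : ZMod d) = (((n:ℕ):ℤ) : ZMod d) := by
      have e2 : (c:ℤ) - (i:ℤ) * (m:ℤ) - (jn:ℤ) = (n:ℤ) := by push_cast [← hcge]; ring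
      have e3 := congrArg (fun z : ℤ => ((z : ZMod d))) e2
      push_cast [ZMod.natCast_val, ZMod.cast_id]
      push_cast at e3
      exact_mod_cast e3
    rw [hFc _ _ hres] at horth1
    exact horth1
  -- F 0 = 1
  have hF0 : F 0 = 1 := by
    rw [hF]
    simp only [zero_mul, zpow_zero, mul_one]
    rw [← hnorm, ip]
    refine Finset.sum_congr rfl fun j _ => ?_
    rw [hβ]
    exact Complex.normSq_eq_conj_mul_self
  -- support bound
  set T : Finset (ZMod d) := Finset.univ.filter (fun k => α k ≠ 0) with hT
  have hTcard : 2 * T.card ≤ d := by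
    have hmap : ∀ k ∈ T, k + 1 ∈ Tᶜ := by
      intro k hk
      rw [hT, Finset.mem_filter] at hk
      rw [Finset.mem_compl, hT, Finset.mem_filter]
      rcases mul_eq_zero.1 (hgamma k) with h | h
      · push_neg
        intro _
        exact (map_eq_zero (starRingEnd ℂ)).1 h
      · exact absurd h hk.2
    have hinj : Set.InjOn (fun k : ZMod d => k + 1) ↑T := by
      intro a _ b _ hab
      simpa using hab
    have hle := Finset.card_le_card_of_injOn _ hmap hinj
    rw [Finset.card_compl, ZMod.card] at hle
    omega
  have hTle : T.card ≤ c := by omega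
  -- the polynomial
  set P : Polynomial ℂ := ∑ jj ∈ Finset.range (2*L+1),
    Polynomial.C (F ((jj:ℤ) - (L:ℤ))) * Polynomial.X ^ jj with hP
  have hPdeg : P.natDegree ≤ 2*L := by
    rw [hP]
    refine Polynomial.natDegree_sum_le_of_forall_le _ _ fun jj hjj => ?_
    exact le_trans (Polynomial.natDegree_C_mul_X_pow_le _ _) (by
      have := Finset.mem_range.1 hjj; omega)
  have hPcoeff : P.coeff L = 1 := by
    rw [hP, Polynomial.finset_sum_coeff]
    have : ∀ jj ∈ Finset.range (2*L+1),
        (Polynomial.C (F ((jj:ℤ) - (L:ℤ))) * Polynomial.X ^ jj).coeff L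
          = if jj = L then F ((jj:ℤ) - (L:ℤ)) else 0 := by
      intro jj _
      rw [Polynomial.coeff_C_mul, Polynomial.coeff_X_pow]
      by_cases h : L = jj
      · subst h; simp
      · rw [if_neg h, if_neg (fun hh => h hh.symm), mul_zero]
    rw [Finset.sum_congr rfl this, Finset.sum_ite_eq' (Finset.range (2*L+1)) L]
    rw [if_pos (Finset.mem_range.2 (by omega))]
    rw [sub_self, hF0]
  have hPne : P ≠ 0 := by
    intro h
    rw [h, Polynomial.coeff_zero] at hPcoeff
    exact zero_ne_one hPcoeff
  -- evaluation identity
  have hEval : ∀ k : ZMod d, (d:ℂ) * β k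
      = (ω d) ^ ((L:ℤ) * (k.val:ℤ)) * P.eval ((ω d) ^ (-(k.val:ℤ))) := by
    intro k
    have hinv := aux_inv d hζ hζ0 β k
    have hFn : ∀ n : ℕ, (∑ j : ZMod d, β j * (ω d) ^ ((n:ℤ) * (j.val:ℤ))) = F (n:ℤ) := by
      intro n; rw [hF]
    rw [Finset.sum_congr rfl (fun n _ => by rw [hFn n])] at hinv
    rw [← hinv]
    -- middle zeros
    have hmid : ∀ nn : ℕ, L < nn → nn < d - L → F (nn:ℤ) = 0 := by
      intro nn hn1 hn2
      by_cases hcc : nn ≤ c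
      · exact hFband nn (by omega) hcc
      · have h1 : F ((nn:ℤ)) = F (-(((d - nn : ℕ)):ℤ)) := by
          apply hFc
          push_cast [Nat.cast_sub (show nn ≤ d by omega)]
          rw [show -(((d:ZMod d)) - (nn : ZMod d)) = (nn : ZMod d) - (d : ZMod d) by ring]
          rw [ZMod.natCast_self]
          ring
        rw [h1, hFsymm, hFband (d - nn) (by omega) (by omega), map_zero]
    -- split the sum
    have hstep1 : ∑ nn ∈ Finset.range d, F (nn:ℤ) * (ω d) ^ (-((nn:ℤ)*(k.val:ℤ)))
        = ∑ nn ∈ (Finset.range d).filter (fun nn => nn ≤ L ∨ d - L ≤ nn),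
            F (nn:ℤ) * (ω d) ^ (-((nn:ℤ)*(k.val:ℤ))) := by
      refine (Finset.sum_filter_of_ne ?_).symm
      intro nn hnn hne0
      by_contra hcon
      push_neg at hcon
      exact hne0 (by rw [hmid nn (by omega) (by omega), zero_mul])
    have hstep2 : ∑ nn ∈ (Finset.range d).filter (fun nn => nn ≤ L ∨ d - L ≤ nn),
            F (nn:ℤ) * (ω d) ^ (-((nn:ℤ)*(k.val:ℤ)))
        = ∑ jj ∈ Finset.range (2*L+1), F ((jj:ℤ) - (L:ℤ)) * (ω d) ^ (((L:ℤ) - (jj:ℤ)) * (k.val:ℤ)) := by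
      refine Finset.sum_nbij' (fun nn => if nn ≤ L then nn + L else nn - (d - L))
        (fun jj => if L ≤ jj then jj - L else jj + (d - L)) ?_ ?_ ?_ ?_ ?_
      · intro a ha
        simp only [Finset.mem_filter, Finset.mem_range] at ha ⊢
        rcases ha.2 with h | h
        · rw [if_pos h]; omega
        · rw [if_neg (by omega)]; omega
      · intro a ha
        simp only [Finset.mem_range] at ha
        simp only [Finset.mem_filter, Finset.mem_range]
        by_cases h : L ≤ a
        · rw [if_pos h]; omega
        · rw [if_neg h]; omega
      · intro a ha
        simp only [Finset.mem_filter, Finset.mem_range] at ha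
        rcases ha.2 with h | h
        · rw [if_pos h, if_pos (show L ≤ a + L by omega)]; omega
        · rw [if_neg (show ¬ a ≤ L by omega),
              if_neg (show ¬ L ≤ a - (d - L) by omega)]; omega
      · intro a ha
        simp only [Finset.mem_range] at ha
        by_cases h : L ≤ a
        · rw [if_pos h, if_pos (show a - L ≤ L by omega)]; omega
        · rw [if_neg h, if_neg (show ¬ a + (d - L) ≤ L by omega)]; omega
      · intro nn hnn
        simp only [Finset.mem_filter, Finset.mem_range] at hnn
        rcases hnn.2 with h | h
        · rw [if_pos h]
          congr 1
          · congr 1; push_cast; ring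
          · congr 1; push_cast; ring
        · rw [if_neg (by omega)]
          have hxx : (((nn - (d - L) : ℕ)):ℤ) = (nn:ℤ) - (d:ℤ) + (L:ℤ) := by
            push_cast [Nat.cast_sub (show d - L ≤ nn from h), Nat.cast_sub (show L ≤ d by omega)]
            ring
          congr 1
          · apply hFc
            rw [hxx]
            push_cast [ZMod.natCast_self]
            ring
          · apply hz
            rw [hxx]
            push_cast [ZMod.natCast_self]
            ring
    rw [hstep1, hstep2]
    -- evaluate P
    rw [hP, Polynomial.eval_finset_sum, Finset.mul_sum]
    refine Finset.sum_congr rfl fun jj hjj => ?_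
    rw [Polynomial.eval_mul, Polynomial.eval_C, Polynomial.eval_pow, Polynomial.eval_X]
    rw [← zpow_natCast ((ω d) ^ (-(k.val:ℤ))) jj, ← zpow_mul]
    rw [show (ω d) ^ ((L:ℤ) * (k.val:ℤ)) * (F ((jj:ℤ) - (L:ℤ)) * (ω d) ^ (-(k.val:ℤ) * (jj:ℤ)))
        = F ((jj:ℤ) - (L:ℤ)) * ((ω d) ^ ((L:ℤ) * (k.val:ℤ)) * (ω d) ^ (-(k.val:ℤ) * (jj:ℤ))) by ring]
    rw [← zpow_add₀ hζ0]
    congr 1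
    ring
  -- final contradiction
  have hTc : 2*L < (Tᶜ).card := by
    rw [Finset.card_compl, ZMod.card]
    omega
  have hroots : ∀ x ∈ (Tᶜ).image (fun k : ZMod d => (ω d) ^ (-(k.val:ℤ))), P.eval x = 0 := by
    intro x hx
    obtain ⟨k, hk, rfl⟩ := Finset.mem_image.1 hx
    have hk0 : α k = 0 := by
      rw [Finset.mem_compl, hT, Finset.mem_filter] at hk
      push_neg at hk
      exact hk (Finset.mem_univ k)
    have hev := hEval k
    rw [hβ] at hev
    simp only [hk0, Complex.normSq_zero, Complex.ofReal_zero, mul_zero] at hev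
    rcases mul_eq_zero.1 hev.symm with h | h
    · exact absurd h (zpow_ne_zero _ hζ0)
    · exact h
  have hinj : Set.InjOn (fun k : ZMod d => (ω d) ^ (-(k.val:ℤ))) ↑(Tᶜ) := by
    intro a _ b _ hab
    have hab' : (ω d) ^ (-(a.val:ℤ)) = (ω d) ^ (-(b.val:ℤ)) := hab
    have : (ω d) ^ ((b.val:ℤ) - (a.val:ℤ)) = 1 := by
      rw [sub_eq_add_neg, zpow_add₀ hζ0, hab', ← zpow_add₀ hζ0]
      simp
    rw [hζ.zpow_eq_one_iff_dvd] at this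
    have hv1 := ZMod.val_lt a
    have hv2 := ZMod.val_lt b
    have hvv : a.val = b.val := by
      rcases this with ⟨q, hq⟩
      have hq' : (b.val:ℤ) - (a.val:ℤ) = d * q := hq
      have hd1 : (1:ℤ) ≤ d := by exact_mod_cast Nat.one_le_iff_ne_zero.2 (NeZero.ne d)
      have hn1 : ((a.val:ℤ)) < d := by exact_mod_cast hv1
      have hn2 : ((b.val:ℤ)) < d := by exact_mod_cast hv2
      have hn3 : (0:ℤ) ≤ (a.val:ℤ) := Int.natCast_nonneg _
      have hn4 : (0:ℤ) ≤ (b.val:ℤ) := Int.natCast_nonneg _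
      have hqb1 : -1 < q := by nlinarith
      have hqb2 : q < 1 := by nlinarith
      have hq0 : q = 0 := by omega
      rw [hq0, mul_zero] at hq'
      omega
    exact ZMod.val_injective d hvv
  have hcard : 2*L < ((Tᶜ).image (fun k : ZMod d => (ω d) ^ (-(k.val:ℤ)))).card := by
    rw [Finset.card_image_of_injOn hinj]
    exact hTc
  exact hPne (Polynomial.eq_zero_of_natDegree_lt_card_of_eval_eq_zero' P _ hroots
    (lt_of_le_of_lt hPdeg hcard))
end

section
/- Let d ≥ 9 be odd and suppose d ≤ ⌊√d⌋·⌈√d⌉. Let k₁ be the largest nonnegative integer k such that d ≤ (⌊√d⌋ − k)(⌈√d⌉ + k). Then there exists a set S ⊆ ℤ/dℤ × ℤ/dℤ of cardinality |S| = ⌊√d⌋ + ⌈√d⌉ + ⌈⌈(d−1)/4⌉ / (⌈√d⌉ + k₁)⌉ such that there is no unit vector α ∈ ℂ^d for which the vectors X^m Z^n α, (m,n) ∈ S, are pairwise orthogonal; that is, there exists a 1-LOCC indistinguishable set of that many generalized Bell states in d⊗d. -/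
open Complex

/-!
Write `p = conj α * α` and `g = conj α * α (· - 1)`. Orthogonality of `U_{0,x} α` and
`U_{m,y} α` says that the discrete Fourier transform of `conj α * α (· - m)` vanishes at `x - y`.
The `Z`-exponents `x < B` at level `X⁰` and `jB`, `j < A`, at level `X¹` have differences
exhausting `ℤ/d` as soon as `d ≤ AB`, so `ĝ = 0` and hence `g = 0`. The remaining `X⁰`-exponents
`⌊d/4⌋ + jB`, `1 ≤ j ≤ t`, make the differences at level `X⁰` cover every frequency `c` with
`Re ω^c < 0` (this needs `d` odd, to avoid `c = d/2`), so `p̂` vanishes there. Now `g = 0` says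
that `p` has zero autocorrelation at shift `1`, i.e. `∑_c |p̂ c|² ω^c = 0`. Taking real parts,
all terms are nonnegative and the `c = 0` term is `|p̂ 0|² = ‖α‖⁴ = 1`, a contradiction.

The theorem takes `A = ⌊√d⌋ - k₁`, `B = ⌈√d⌉ + k₁` and `t = ⌈⌈(d-1)/4⌉ / B⌉`; maximality of `k₁`
gives `(A - 1)B < d`, which keeps the chosen exponents distinct mod `d`.
-/

open ZMod Finset
open scoped ComplexConjugate

section Fourier

variable {d : ℕ} [NeZero d]

lemma omega_pow_eq_stdAddChar (n : ℕ) : ω d ^ n = stdAddChar (n : ZMod d) := by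
  rw [stdAddChar_apply, toCircle_natCast, ω, ← Complex.exp_nat_mul]
  congr 1
  ring

lemma pU_apply (m n : ZMod d) (α : ZMod d → ℂ) (k : ZMod d) :
    pU d m n α k = stdAddChar (n * (k - m)) * α (k - m) := by
  rw [pU, omega_pow_eq_stdAddChar]
  push_cast [natCast_zmod_val]
  rfl

def shiftProd (α : ZMod d → ℂ) (m : ZMod d) : ZMod d → ℂ :=
  fun k => conj (α k) * α (k - m)

lemma ip_pU_zero_pU (α : ZMod d → ℂ) (x m y : ZMod d) :
    ip d (pU d 0 x α) (pU d m y α) = stdAddChar (-(y * m)) * 𝓕 (shiftProd α m) (x - y) := by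
  simp only [ip, pU_apply, dft_apply, mul_sum, smul_eq_mul, shiftProd, sub_zero, map_mul,
    ← AddChar.map_neg_eq_conj]
  refine sum_congr rfl fun k _ => ?_
  have h : stdAddChar (-(x * k)) * stdAddChar (y * (k - m)) =
      stdAddChar (-(y * m)) * stdAddChar (-(k * (x - y))) := by
    rw [← AddChar.map_add_eq_mul, ← AddChar.map_add_eq_mul]
    ring_nf
  linear_combination conj (α k) * α (k - m) * h

lemma sum_normSq_dft_mul_stdAddChar (f : ZMod d → ℂ) (w : ZMod d) :
    ∑ c, (normSq (𝓕 f c) : ℂ) * stdAddChar (c * w) = d * ∑ j, f j * conj (f (j - w)) := by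
  classical
  have expand : ∀ c, (normSq (𝓕 f c) : ℂ) * stdAddChar (c * w) =
      ∑ j, ∑ l, f j * conj (f l) * stdAddChar (c * (l - j + w)) := by
    intro c
    rw [← mul_conj, dft_apply, map_sum, sum_mul_sum, sum_mul]
    refine sum_congr rfl fun j _ => ?_
    rw [sum_mul]
    refine sum_congr rfl fun l _ => ?_
    rw [smul_eq_mul, smul_eq_mul, map_mul, ← AddChar.map_neg_eq_conj, neg_neg,
      show c * (l - j + w) = -(j * c) + l * c + c * w by ring, AddChar.map_add_eq_mul,
      AddChar.map_add_eq_mul]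
    ring
  have orthogonality : ∀ j l : ZMod d,
      ∑ c, f j * conj (f l) * stdAddChar (c * (l - j + w)) =
        if l = j - w then d * (f j * conj (f l)) else 0 := by
    intro j l
    have hcond : l - j + w = 0 ↔ l = j - w :=
      ⟨fun h => by linear_combination h, fun h => by linear_combination h⟩
    rw [← mul_sum, AddChar.sum_mulShift _ (isPrimitive_stdAddChar d), ZMod.card]
    simp only [hcond]
    split_ifs <;> simp [mul_comm]
  calc ∑ c, (normSq (𝓕 f c) : ℂ) * stdAddChar (c * w)
      = ∑ c, ∑ j, ∑ l, f j * conj (f l) * stdAddChar (c * (l - j + w)) :=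
        sum_congr rfl fun c _ => expand c
    _ = ∑ j, ∑ l, ∑ c, f j * conj (f l) * stdAddChar (c * (l - j + w)) := by
        rw [sum_comm]
        exact sum_congr rfl fun j _ => sum_comm
    _ = ∑ j, d * (f j * conj (f (j - w))) := by
        simp only [orthogonality, sum_ite_eq', mem_univ, if_true]
    _ = d * ∑ j, f j * conj (f (j - w)) := (mul_sum ..).symm

lemma stdAddChar_re_nonneg {c : ZMod d} (h : 4 * c.val ≤ d) : 0 ≤ (stdAddChar c).re := by
  rw [stdAddChar_apply, toCircle_apply,
    show 2 * Real.pi * I * c.val / d = ((2 * Real.pi * c.val / d : ℝ) : ℂ) * I by push_cast; ring,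
    exp_ofReal_mul_I_re]
  have hd : (0 : ℝ) < d := by simp [Nat.pos_of_neZero]
  have hc : 4 * (c.val : ℝ) ≤ d := by exact_mod_cast h
  apply Real.cos_nonneg_of_mem_Icc
  constructor
  · have : 0 ≤ 2 * Real.pi * c.val / d := by positivity
    linarith [Real.pi_pos]
  · rw [div_le_iff₀ hd]
    nlinarith [Real.pi_pos]

lemma ip_self_eq_zero_of_dft_shiftProd (α : ZMod d → ℂ) (h₁ : 𝓕 (shiftProd α 1) = 0)
    (h₀ : ∀ c, (stdAddChar c).re < 0 → 𝓕 (shiftProd α 0) c = 0) : ip d α α = 0 := by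
  have hshift : shiftProd α 1 = 0 := (LinearEquiv.map_eq_zero_iff dft).1 h₁
  have hsum : ∑ c, normSq (𝓕 (shiftProd α 0) c) * (stdAddChar c).re = 0 := by
    have h := congrArg re (sum_normSq_dft_mul_stdAddChar (shiftProd α 0) 1)
    have hprod : ∀ j, shiftProd α 0 j * conj (shiftProd α 0 (j - 1)) =
        shiftProd α 1 j * conj (shiftProd α 1 j) := by
      intro j
      simp only [shiftProd, sub_zero, map_mul, conj_conj]
      ring
    simpa [re_sum, hprod, hshift] using h
  have hterm := (sum_eq_zero_iff_of_nonneg fun c _ => ?_).1 hsum 0 (mem_univ 0)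
  · rw [AddChar.map_zero_eq_one, one_re, mul_one, normSq_eq_zero, dft_apply_zero] at hterm
    simpa [ip, shiftProd] using hterm
  · rcases lt_or_ge (stdAddChar c).re 0 with hc | hc
    · simp [h₀ c hc]
    · exact mul_nonneg (normSq_nonneg _) hc

lemma exists_natCast_eq_of_stdAddChar_re_neg (hodd : Odd d) {c : ZMod d}
    (hc : (stdAddChar c).re < 0) : ∃ r : ℕ, d < 4 * r ∧ 2 * r < d ∧ (c = r ∨ c = -r) := by
  have hval : d < 4 * c.val := by
    by_contra h
    exact hc.not_ge (stdAddChar_re_nonneg (by omega))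
  have hneg : d < 4 * (-c).val := by
    by_contra h
    have := stdAddChar_re_nonneg (c := -c) (by omega)
    rw [AddChar.map_neg_eq_conj, conj_re] at this
    linarith
  have hc0 : c ≠ 0 := by
    rintro rfl
    simp at hval
  rw [ZMod.neg_val, if_neg hc0] at hneg
  have hlt := ZMod.val_lt c
  have hd := Nat.odd_iff.1 hodd
  rcases lt_or_ge (2 * c.val) d with h | h
  · exact ⟨c.val, hval, h, Or.inl (natCast_zmod_val c).symm⟩
  · refine ⟨d - c.val, by omega, by omega, Or.inr ?_⟩
    rw [Nat.cast_sub hlt.le, ZMod.natCast_self, zero_sub, neg_neg, natCast_zmod_val]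

end Fourier

lemma natCast_injOn_Iio {d : ℕ} : Set.InjOn (Nat.cast : ℕ → ZMod d) (Set.Iio d) :=
  fun x hx y hy h => by
    simpa [val_natCast_of_lt hx, val_natCast_of_lt hy] using congrArg ZMod.val h

lemma exists_add_add_one_eq_mul {n A B : ℕ} (h : n < A * B) :
    ∃ j < A, ∃ i < B, n + i + 1 = (j + 1) * B := by
  have hB : 0 < B := Nat.pos_of_ne_zero (by rintro rfl; simp at h)
  refine ⟨n / B, Nat.div_lt_of_lt_mul (by rwa [mul_comm]), B - 1 - n % B, by omega, ?_⟩
  have := Nat.div_add_mod' n B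
  have := Nat.mod_lt n hB
  rw [add_mul, one_mul]
  omega

lemma exists_eq_natCast_mul_sub {d A B : ℕ} [NeZero d] (hd : d ≤ A * B) (c : ZMod d) :
    ∃ j < A, ∃ i < B, c = ((j * B : ℕ) : ZMod d) - i := by
  obtain ⟨j, hj, i, hi, h⟩ := exists_add_add_one_eq_mul ((c + B - 1).val_lt.trans_le hd)
  refine ⟨j, hj, i, hi, ?_⟩
  have h' := congrArg (Nat.cast : ℕ → ZMod d) h
  push_cast [natCast_zmod_val] at h' ⊢
  linear_combination h'

def phaseSet (d B t : ℕ) : Finset ℕ :=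
  range B ∪ (Icc 1 t).image fun j => d / 4 + j * B

def bellSet (d A B t : ℕ) : Finset (ZMod d × ZMod d) :=
  (phaseSet d B t).image (fun x : ℕ => ((0 : ZMod d), (x : ZMod d))) ∪
    (range A).image fun j : ℕ => ((1 : ZMod d), ((j * B : ℕ) : ZMod d))

lemma exists_mem_phaseSet_add_eq {d B t r : ℕ} (hr : d < 4 * r) (hr' : r ≤ d / 4 + t * B) :
    ∃ x ∈ phaseSet d B t, ∃ y ∈ phaseSet d B t, y + r = x := by
  obtain ⟨j, hj, i, hi, h⟩ := exists_add_add_one_eq_mul (n := r - d / 4 - 1) (A := t) (B := B)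
    (by omega)
  exact ⟨d / 4 + (j + 1) * B,
    mem_union_right _ (mem_image_of_mem _ (mem_Icc.2 ⟨by omega, by omega⟩)),
    i, mem_union_left _ (mem_range.2 hi), by omega⟩

lemma card_phaseSet {d B t : ℕ} (hB : 0 < B) : (phaseSet d B t).card = B + t := by
  rw [phaseSet, card_union_of_disjoint, card_range, card_image_of_injective, Nat.card_Icc,
    Nat.add_sub_cancel]
  · intro j j' h
    exact Nat.eq_of_mul_eq_mul_right hB (by simpa using h)
  · rw [disjoint_left]
    intro x hx hx'
    obtain ⟨j, hj, rfl⟩ := mem_image.1 hx'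
    have : B ≤ j * B := Nat.le_mul_of_pos_left B (mem_Icc.1 hj).1
    simp at hx
    omega

lemma card_bellSet {d A B t : ℕ} (hd : 1 < d) (hB : 0 < B) (hBd : B ≤ d)
    (ht : d / 4 + t * B < d) (hA : (A - 1) * B < d) :
    (bellSet d A B t).card = B + t + A := by
  have h01 : (0 : ZMod d) ≠ 1 := by
    have := Fact.mk hd
    exact zero_ne_one
  rw [bellSet, card_union_of_disjoint, card_image_of_injOn, card_image_of_injOn, card_range,
    card_phaseSet hB]
  · intro j hj j' hj' h
    have hlt : ∀ j ∈ (range A : Set ℕ), j * B < d := fun j hj =>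
      lt_of_le_of_lt (Nat.mul_le_mul_right B (by simp at hj; omega)) hA
    exact Nat.eq_of_mul_eq_mul_right hB
      (natCast_injOn_Iio (hlt j hj) (hlt j' hj') (by simpa using h))
  · intro x hx y hy h
    have hlt : ∀ x ∈ (phaseSet d B t : Set ℕ), x < d := by
      intro x hx
      simp only [phaseSet, coe_union, coe_range, coe_image, Set.mem_union, Set.mem_Iio,
        Set.mem_image, coe_Icc, Set.mem_Icc] at hx
      rcases hx with hx | ⟨j, hj, rfl⟩
      · omega
      · exact lt_of_le_of_lt (by gcongr; exact hj.2) ht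
    exact natCast_injOn_Iio (hlt x hx) (hlt y hy) (by simpa using h)
  · simp [disjoint_left, h01.symm]

lemma bellSet_not_orthonormal {d A B t : ℕ} [NeZero d] (hd : 1 < d) (hodd : Odd d)
    (hAB : d ≤ A * B) (ht : d ≤ 2 * (d / 4 + t * B) + 1) :
    ¬ ∃ α : ZMod d → ℂ, ip d α α = 1 ∧ ∀ p ∈ bellSet d A B t, ∀ q ∈ bellSet d A B t, p ≠ q →
      ip d (pU d p.1 p.2 α) (pU d q.1 q.2 α) = 0 := by
  rintro ⟨α, hα, horth⟩
  have h01 : (0 : ZMod d) ≠ 1 := by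
    have := Fact.mk hd
    exact zero_ne_one
  have mem₀ : ∀ x ∈ phaseSet d B t, ((0 : ZMod d), (x : ZMod d)) ∈ bellSet d A B t :=
    fun x hx => mem_union_left _ (mem_image_of_mem _ hx)
  have mem₁ : ∀ j < A, ((1 : ZMod d), ((j * B : ℕ) : ZMod d)) ∈ bellSet d A B t :=
    fun j hj => mem_union_right _ (mem_image_of_mem _ (mem_range.2 hj))
  refine one_ne_zero (hα.symm.trans (ip_self_eq_zero_of_dft_shiftProd α ?_ ?_))
  · ext c
    obtain ⟨j, hj, i, hi, hc⟩ := exists_eq_natCast_mul_sub hAB (-c)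
    have h := horth _ (mem₀ i (mem_union_left _ (mem_range.2 hi))) _ (mem₁ j hj) (by simp [h01])
    rw [ip_pU_zero_pU, mul_eq_zero, or_iff_right (AddChar.val_isUnit _ _).ne_zero,
      show (i : ZMod d) - (j * B : ℕ) = c by linear_combination hc] at h
    exact h
  · intro c hc
    have orth : ∀ x ∈ phaseSet d B t, ∀ y ∈ phaseSet d B t, (x : ZMod d) - y ≠ 0 →
        𝓕 (shiftProd α 0) (x - y) = 0 := by
      intro x hx y hy hxy
      have h := horth _ (mem₀ x hx) _ (mem₀ y hy) (by simpa [sub_eq_zero] using hxy)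
      rwa [ip_pU_zero_pU, mul_zero, neg_zero, AddChar.map_zero_eq_one, one_mul] at h
    obtain ⟨r, hr4, hr2, hcr⟩ := exists_natCast_eq_of_stdAddChar_re_neg hodd hc
    obtain ⟨x, hx, y, hy, hxy⟩ := exists_mem_phaseSet_add_eq (t := t) (B := B) hr4 (by omega)
    have hr : (x : ZMod d) - y = r := by
      rw [← hxy]
      push_cast
      ring
    have hr0 : (r : ZMod d) ≠ 0 := by
      rw [Ne, ZMod.natCast_eq_zero_iff]
      exact fun h => by have := Nat.le_of_dvd (by omega) h; omega
    rcases hcr with rfl | rfl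
    · exact hr ▸ orth x hx y hy (hr ▸ hr0)
    · rw [← hr, neg_sub]
      exact orth y hy x hx (by rwa [← neg_sub, hr, neg_ne_zero])

lemma ceil_div_mul_bounds (m : ℕ) {n : ℕ} (hn : 0 < n) :
    m ≤ ⌈(m : ℚ) / n⌉₊ * n ∧ ⌈(m : ℚ) / n⌉₊ * n < m + n := by
  have hn' : (0 : ℚ) < n := by exact_mod_cast hn
  constructor
  · have h := Nat.le_ceil ((m : ℚ) / n)
    rw [div_le_iff₀ hn'] at h
    exact_mod_cast h
  · have h := mul_lt_mul_of_pos_right (Nat.ceil_lt_add_one (by positivity : (0 : ℚ) ≤ m / n)) hn'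
    rw [add_mul, div_mul_cancel₀ _ hn'.ne', one_mul] at h
    exact_mod_cast h

lemma sub_mul_add_bounds_of_isGreatest {d a b k : ℕ}
    (h : IsGreatest {k : ℕ | (d : ℤ) ≤ ((a : ℤ) - (k : ℤ)) * ((b : ℤ) + (k : ℤ))} k)
    (ha : 3 ≤ a) (haa : a * a ≤ d) (hba : b ≤ a + 1) :
    k + 2 ≤ a ∧ d ≤ (a - k) * (b + k) ∧ (a - k - 1) * (b + k) < d := by
  have hmem : (d : ℤ) ≤ ((a : ℤ) - k) * (b + k) := h.1
  have hnext : ((a : ℤ) - k - 1) * (b + k + 1) < d := by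
    by_contra hge
    have : k + 1 ≤ k :=
      h.2 (show (d : ℤ) ≤ ((a : ℤ) - ((k + 1 : ℕ) : ℤ)) * ((b : ℤ) + ((k + 1 : ℕ) : ℤ)) by
        push_cast
        linarith)
    omega
  have hka : k + 2 ≤ a := by
    by_contra hlt
    have haZ : (3 : ℤ) ≤ a := by exact_mod_cast ha
    have haaZ : (a : ℤ) * a ≤ d := by exact_mod_cast haa
    have hbaZ : (b : ℤ) ≤ a + 1 := by exact_mod_cast hba
    rcases lt_or_ge (k : ℤ) a with hk | hk
    · have : (a : ℤ) - k = 1 := by omega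
      rw [this, one_mul] at hmem
      nlinarith
    · nlinarith
  refine ⟨hka, ?_, ?_⟩ <;> zify [show k ≤ a by omega, show 1 ≤ a - k by omega]
  · exact hmem
  · nlinarith

theorem stmt_10_general (d : ℕ) [NeZero d] (hd : 9 ≤ d) (hodd : Odd d)
    (k₁ : ℕ)
    (hk₁ : IsGreatest {k : ℕ |
      (d : ℤ) ≤ ((⌊Real.sqrt d⌋₊ : ℤ) - (k : ℤ)) * ((⌈Real.sqrt d⌉₊ : ℤ) + (k : ℤ))} k₁) :
    ∃ S : Finset (ZMod d × ZMod d),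
      S.card = ⌊Real.sqrt d⌋₊ + ⌈Real.sqrt d⌉₊ +
          ⌈(⌈((d : ℚ) - 1) / 4⌉₊ : ℚ) / ((⌈Real.sqrt d⌉₊ : ℚ) + (k₁ : ℚ))⌉₊ ∧
      ¬ ∃ α : ZMod d → ℂ, ip d α α = 1 ∧
        ∀ p ∈ S, ∀ q ∈ S, p ≠ q → ip d (pU d p.1 p.2 α) (pU d q.1 q.2 α) = 0 := by
  set a := ⌊Real.sqrt d⌋₊ with ha
  set b := ⌈Real.sqrt d⌉₊
  have ha3 : 3 ≤ a := by
    rw [ha, Real.nat_floor_real_sqrt_eq_nat_sqrt, Nat.le_sqrt]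
    omega
  have haa : a * a ≤ d := by
    rw [ha, Real.nat_floor_real_sqrt_eq_nat_sqrt]
    exact Nat.sqrt_le d
  have hab : a ≤ b := Nat.floor_le_ceil _
  have hba : b ≤ a + 1 := Nat.ceil_le_floor_add_one _
  obtain ⟨hka, hAB, hAB'⟩ := sub_mul_add_bounds_of_isGreatest hk₁ ha3 haa hba
  have hB : 2 * (b + k₁) ≤ d + 1 := by nlinarith
  set M := ⌈((d : ℚ) - 1) / 4⌉₊ with hM
  obtain ⟨hM₁, hM₂⟩ := ceil_div_mul_bounds (d - 1) (n := 4) (by norm_num)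
  rw [Nat.cast_sub (by omega : 1 ≤ d), Nat.cast_one, Nat.cast_ofNat, ← hM] at hM₁ hM₂
  obtain ⟨ht₁, ht₂⟩ := ceil_div_mul_bounds M (n := b + k₁) (by omega)
  rw [Nat.cast_add] at ht₁ ht₂
  have hd₂ := Nat.odd_iff.1 hodd
  refine ⟨bellSet d (a - k₁) (b + k₁) ⌈(M : ℚ) / (b + k₁)⌉₊, ?_,
    bellSet_not_orthonormal (by omega) hodd hAB (by omega)⟩
  rw [card_bellSet (by omega) (by omega) (by omega) (by omega) hAB']
  omega

/-- (Theorem 3 of the paper, first case.) Let `d ≥ 9` be odd with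
`d ≤ ⌊√d⌋⌈√d⌉`, and let `k₁` be the largest `k ≥ 0` with
`d ≤ (⌊√d⌋ - k)(⌈√d⌉ + k)`. Then there exists a 1-LOCC indistinguishable set of
`⌊√d⌋ + ⌈√d⌉ + ⌈⌈(d-1)/4⌉ / (⌈√d⌉ + k₁)⌉` generalized Bell states in `d ⊗ d`. -/
theorem stmt_10 (d : ℕ) [NeZero d] (hd : 9 ≤ d) (hodd : Odd d)
    (hle : d ≤ ⌊Real.sqrt d⌋₊ * ⌈Real.sqrt d⌉₊)
    (k₁ : ℕ)
    (hk₁ : IsGreatest {k : ℕ |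
      (d : ℤ) ≤ ((⌊Real.sqrt d⌋₊ : ℤ) - (k : ℤ)) * ((⌈Real.sqrt d⌉₊ : ℤ) + (k : ℤ))} k₁) :
    ∃ S : Finset (ZMod d × ZMod d),
      S.card = ⌊Real.sqrt d⌋₊ + ⌈Real.sqrt d⌉₊ +
          ⌈(⌈((d : ℚ) - 1) / 4⌉₊ : ℚ) / ((⌈Real.sqrt d⌉₊ : ℚ) + (k₁ : ℚ))⌉₊ ∧
      ¬ ∃ α : ZMod d → ℂ, ip d α α = 1 ∧
        ∀ p ∈ S, ∀ q ∈ S, p ≠ q → ip d (pU d p.1 p.2 α) (pU d q.1 q.2 α) = 0 :=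
  stmt_10_general d hd hodd k₁ hk₁
end
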